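/- arXiv:1707.08192 — 6 statements merged into one kernel-verified Lean document; each statement's English description precedes it below -/
import Mathlib

section
/- For every board B ⊆ [m]×[n] with m ≤ n, every prime power q, and every 0 ≤ k ≤ m, the matrix counts can be recovered from the q-hit numbers: M_k(B,q) = q^{C(k,2)−C(m,2)} · ([n−m]!_q/[n−k]!_q) · Σ_{i=k}^{m} H_i(B,q) · [i choose k]_q. In particular H_m(B,q) = M_m(B,q). -/
open Finset

/-- The number of `m × n` matrices over the finite field `F` of rank `r`
whose support is contained in the board `B`. -/
noncomputable def mcount (F : Type) [Field F] [Fintype F] {m n : ℕ}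
    (B : Finset (Fin m × Fin n)) (r : ℕ) : ℕ :=
  Nat.card {M : Matrix (Fin m) (Fin n) F // M.rank = r ∧ ∀ i j, (i, j) ∉ B → M i j = 0}

/-- The `q`-factorial `[k]!_q = ∏_{i=1}^k (q^i - 1)/(q - 1)`. -/
def qFact (q : ℚ) (k : ℕ) : ℚ := ∏ i ∈ Finset.range k, (q ^ (i + 1) - 1) / (q - 1)

/-- The `q`-binomial coefficient. -/
def qBinom (q : ℚ) (k l : ℕ) : ℚ :=
  if l ≤ k then qFact q k / (qFact q l * qFact q (k - l)) else 0

/-- The `q`-Pochhammer symbol `(a; q)_k = ∏_{i=0}^{k-1} (1 - a q^i)`. -/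
def qPoch (a q : ℚ) (k : ℕ) : ℚ := ∏ i ∈ Finset.range k, (1 - a * q ^ i)

/-- The `q`-Krawtchouk polynomial
`K_r(i) = ∑_s (-1)^{r-s} q^{ns + C(r-s,2)} [m-s choose r-s]_q [m-i choose s]_q`,
summed over `0 ≤ s ≤ min(r, m-i)`. -/
def kraw (q : ℚ) (m n r i : ℕ) : ℚ :=
  ∑ s ∈ Finset.range (min r (m - i) + 1),
    (-1 : ℚ) ^ (r - s) * q ^ (n * s + (r - s).choose 2) *
      qBinom q (m - s) (r - s) * qBinom q (m - i) s

/-- The reduced matrix count `M_r(B,q) = 𝔪_r(B,q)/(q-1)^r`. -/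
noncomputable def Mred (F : Type) [Field F] [Fintype F] (q : ℕ) {m n : ℕ}
    (B : Finset (Fin m × Fin n)) (r : ℕ) : ℚ :=
  (mcount F B r : ℚ) / ((q : ℚ) - 1) ^ r

/-- The `q`-hit number
`H_k(B,q) = q^{C(k+1,2)+C(m,2)} ∑_{i=k}^m M_i(B,q) ([n-i]!_q/[n-m]!_q) [i choose k]_q (-1)^{i+k} q^{-ik}`. -/
noncomputable def qHit (F : Type) [Field F] [Fintype F] (q : ℕ) {m n : ℕ}
    (B : Finset (Fin m × Fin n)) (k : ℕ) : ℚ :=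
  (q : ℚ) ^ ((k + 1).choose 2 + m.choose 2) *
    ∑ i ∈ Finset.Icc k m,
      Mred F q B i * (qFact (q : ℚ) (n - i) / qFact (q : ℚ) (n - m)) *
        qBinom (q : ℚ) i k * (-1 : ℚ) ^ (i + k) * (q : ℚ) ^ (-(i * k : ℤ))

/-- The classical hit number `h_i(B)`: the number of injections `σ : [m] → [n]`
with exactly `i` of the cells `(a, σ a)` in `B`. -/
noncomputable def hitNum {m n : ℕ} (B : Finset (Fin m × Fin n)) (i : ℕ) : ℕ :=
  Nat.card {σ : Fin m ↪ Fin n // (Finset.univ.filter fun a => (a, σ a) ∈ B).card = i}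

/-- The diagram `I_w = {(i, w_j) : i < j, w_i < w_j}` of a permutation `w`. -/
def diagram {n : ℕ} (w : Equiv.Perm (Fin n)) : Finset (Fin n × Fin n) :=
  Finset.univ.filter fun p => ∃ j, p.1 < j ∧ w p.1 < w j ∧ p.2 = w j

/-- A board has the NE property if whenever `i < i'`, `j < j'` and
`(i,j), (i',j), (i',j') ∈ B`, then `(i,j') ∈ B`. -/
def hasNE {m n : ℕ} (B : Finset (Fin m × Fin n)) : Prop :=
  ∀ i i' : Fin m, ∀ j j' : Fin n, i < i' → j < j' →
    (i, j) ∈ B → (i', j) ∈ B → (i', j') ∈ B → (i, j') ∈ B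

/-- The placements of `r` non-attacking rooks on the board `B`. -/
def placements {m n : ℕ} (B : Finset (Fin m × Fin n)) (r : ℕ) :
    Finset (Finset (Fin m × Fin n)) :=
  B.powerset.filter fun c =>
    c.card = r ∧ ∀ p ∈ c, ∀ p' ∈ c, p ≠ p' → p.1 ≠ p'.1 ∧ p.2 ≠ p'.2

/-- The number of NE inversions of the rook placement `c` on the board `B`:
cells of `B` not occupied by a rook, not directly north of a rook, and
not directly east of a rook. -/
def invNE {m n : ℕ} (B c : Finset (Fin m × Fin n)) : ℕ :=
  (B.filter fun p => p ∉ c ∧ (∀ p' ∈ c, ¬(p'.2 = p.2 ∧ p.1 < p'.1)) ∧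
    (∀ p' ∈ c, ¬(p'.1 = p.1 ∧ p'.2 < p.2))).card

/-- The Garsia–Remmel `q`-rook number `R^NE_r(B, x) = ∑_c x^{inv^NE_B(c)}`. -/
noncomputable def RNE {m n : ℕ} (B : Finset (Fin m × Fin n)) (r : ℕ) (x : ℚ) : ℚ :=
  ∑ c ∈ placements B r, x ^ invNE B c

/-- A SW corner of `B`: a cell `(i,j) ∈ B` such that no other cell `(i',j') ∈ B`
satisfies `i' ≥ i` and `j' ≤ j`. -/
def isSWCorner {m n : ℕ} (B : Finset (Fin m × Fin n)) (p : Fin m × Fin n) : Prop :=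
  p ∈ B ∧ ∀ p' ∈ B, p' ≠ p → ¬(p.1 ≤ p'.1 ∧ p'.2 ≤ p.2)

/-- The order-preserving embedding `Fin (m-1) → Fin m` whose range avoids `a`. -/
def unContract {m : ℕ} (a : Fin m) (i : Fin (m - 1)) : Fin m :=
  if h : (i : ℕ) < (a : ℕ) then ⟨i, lt_trans h a.isLt⟩
  else ⟨(i : ℕ) + 1, by have := i.isLt; omega⟩

/-- The contraction `B/□` of a board at the cell `□ = (a, b)`: delete the row and
column of `□` and relabel rows and columns order-preservingly. -/
def contractBoard {m n : ℕ} (B : Finset (Fin m × Fin n)) (a : Fin m) (b : Fin n) :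
    Finset (Fin (m - 1) × Fin (n - 1)) :=
  Finset.univ.filter fun p => (unContract a p.1, unContract b p.2) ∈ B

/-- The extended board `B_k ⊆ [m+k] × [n]`, obtained from `B` by adjoining `k` full rows. -/
def extBoard {m n : ℕ} (B : Finset (Fin m × Fin n)) (k : ℕ) :
    Finset (Fin (m + k) × Fin n) :=
  Finset.univ.filter fun p =>
    m ≤ (p.1 : ℕ) ∨ ∃ i : Fin m, (i : ℕ) = (p.1 : ℕ) ∧ (i, p.2) ∈ B

/-- The word `w_1 ⋯ w_{i-1} w_{i+1} ⋯ w_{j-1} w_i w_{j+1} ⋯ w_n` (the entry `w_j`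
deleted and `w_i` moved to position `j`), indexed by `Fin (n-1)` via the
order-preserving relabelling of positions `[n] \ {i}`. -/
def wordU {n : ℕ} (w : Equiv.Perm (Fin n)) (i j : Fin n) (x : Fin (n - 1)) : Fin n :=
  if unContract i x = j then w i else w (unContract i x)


section QAux
variable {Q : ℚ}

lemma qFact_pos (hQ : 2 ≤ Q) (k : ℕ) : 0 < qFact Q k := by
  refine Finset.prod_pos fun i _ => div_pos ?_ (by linarith)
  have : (1:ℚ) < Q ^ (i+1) := one_lt_pow₀ (by linarith) (Nat.succ_ne_zero i)
  linarith

lemma qFact_ne (hQ : 2 ≤ Q) (k : ℕ) : qFact Q k ≠ 0 := (qFact_pos hQ k).ne'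

lemma qFact_zero : qFact Q 0 = 1 := by simp [qFact]

lemma qFact_succ (k : ℕ) : qFact Q (k+1) = qFact Q k * ((Q ^ (k+1) - 1)/(Q-1)) :=
  Finset.prod_range_succ _ _

lemma qBinom_self (hQ : 2 ≤ Q) (k : ℕ) : qBinom Q k k = 1 := by
  simp only [qBinom, if_pos le_rfl, Nat.sub_self, qFact_zero, mul_one]
  exact div_self (qFact_ne hQ k)

lemma qBinom_zero (hQ : 2 ≤ Q) (k : ℕ) : qBinom Q k 0 = 1 := by
  simp only [qBinom, if_pos (Nat.zero_le k), Nat.sub_zero, qFact_zero, one_mul]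
  exact div_self (qFact_ne hQ k)

lemma qBinom_of_lt {k l : ℕ} (h : k < l) : qBinom Q k l = 0 := by
  simp [qBinom, not_le.mpr h]

lemma qBinom_pascal (hQ : 2 ≤ Q) {d t : ℕ} (h : t ≤ d) :
    qBinom Q (d+1) (t+1) = Q ^ (t+1) * qBinom Q d (t+1) + qBinom Q d t := by
  rcases eq_or_lt_of_le h with rfl | h
  · rw [qBinom_self hQ, qBinom_self hQ, qBinom_of_lt (Nat.lt_succ_self _)]; ring
  · obtain ⟨u, rfl⟩ : ∃ u, d = t + 1 + u := ⟨d - t - 1, by omega⟩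
    have e1 : t + 1 + u + 1 - (t + 1) = u + 1 := by omega
    have e2 : t + 1 + u - (t + 1) = u := by omega
    have e3 : t + 1 + u - t = u + 1 := by omega
    rw [qBinom, qBinom, qBinom, if_pos (by omega), if_pos (by omega), if_pos (by omega),
      e1, e2, e3]
    rw [show t+1+u+1 = (t+1+u)+1 from rfl, qFact_succ, qFact_succ (k := u), qFact_succ (k := t)]
    have hq1 : Q - 1 ≠ 0 := by linarith
    have h1 := qFact_ne hQ (t+1+u)
    have h2 := qFact_ne hQ u
    have h3 := qFact_ne hQ t
    have ha : Q ^ (t+1) - 1 ≠ 0 := by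
      have : (1:ℚ) < Q ^ (t+1) := one_lt_pow₀ (by linarith) (Nat.succ_ne_zero t)
      linarith
    have hb : Q ^ (u+1) - 1 ≠ 0 := by
      have : (1:ℚ) < Q ^ (u+1) := one_lt_pow₀ (by linarith) (Nat.succ_ne_zero u)
      linarith
    rw [show Q ^ (t+1+u+1) = Q ^ (t+1) * Q ^ (u+1) by rw [← pow_add]; ring_nf]
    generalize qFact Q (t+1+u) = Fq
    generalize qFact Q t = T at h3 ⊢
    generalize qFact Q u = U at h2 ⊢
    generalize Q ^ (t+1) = a at ha ⊢
    generalize Q ^ (u+1) = b at hb ⊢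
    field_simp
    ring

lemma qbinom_thm (hQ : 2 ≤ Q) (d : ℕ) (x : ℚ) :
    ∑ t ∈ Finset.range (d+1), (-1:ℚ)^t * Q^(t.choose 2) * qBinom Q d t * x^t
      = ∏ i ∈ Finset.range d, (1 - x * Q^i) := by
  induction d generalizing x with
  | zero => simp [qBinom_zero hQ]
  | succ d ih =>
      have key : ∀ t ∈ Finset.range (d+1),
          (-1:ℚ)^(t+1) * Q^((t+1).choose 2) * qBinom Q (d+1) (t+1) * x^(t+1)
          = (-1:ℚ)^(t+1) * Q^((t+1).choose 2) * qBinom Q d (t+1) * (Q*x)^(t+1)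
            + (-x) * ((-1:ℚ)^t * Q^(t.choose 2) * qBinom Q d t * (Q*x)^t) := by
        intro t ht
        rw [qBinom_pascal hQ (Nat.lt_succ_iff.mp (Finset.mem_range.mp ht))]
        have hc : (t+1).choose 2 = t.choose 2 + t := by
          rw [Nat.choose_succ_succ]; simp [Nat.choose_one_right]; omega
        rw [hc]
        ring_nf
      rw [Finset.sum_range_succ' _ (d+1)]
      rw [Finset.sum_congr rfl key, Finset.sum_add_distrib, ← Finset.mul_sum, ih (Q*x)]
      have ht2 : ∑ t ∈ Finset.range (d+1),
          (-1:ℚ)^(t+1) * Q^((t+1).choose 2) * qBinom Q d (t+1) * (Q*x)^(t+1)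
          = ∑ s ∈ Finset.range (d+2), (-1:ℚ)^s * Q^(s.choose 2) * qBinom Q d s * (Q*x)^s
            - (-1:ℚ)^0 * Q^((0:ℕ).choose 2) * qBinom Q d 0 * (Q*x)^0 := by
        rw [Finset.sum_range_succ' _ (d+1)]; ring
      rw [ht2]
      rw [Finset.sum_range_succ, qBinom_of_lt (Nat.lt_succ_self d), ih (Q*x)]
      simp only [pow_zero, Nat.choose_zero_right, qBinom_zero hQ, mul_one, one_mul]
      rw [Finset.prod_range_succ' _ d]
      have : ∀ i, 1 - Q*x*Q^i = 1 - x*Q^(i+1) := by intro i; rw [pow_succ]; ring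
      rw [Finset.prod_congr rfl fun i _ => this i]
      ring

lemma c2 (n : ℕ) : (n.choose 2 : ℤ) * 2 = n * n - n := by
  induction n with
  | zero => simp
  | succ n ih =>
      have : (n+1).choose 2 = n.choose 2 + n := by
        rw [Nat.choose_succ_succ]; simp [Nat.choose_one_right]; omega
      rw [this]; push_cast; push_cast at ih; linarith

lemma qBinom_trinom (hQ : 2 ≤ Q) {k i j : ℕ} (hki : k ≤ i) (hij : i ≤ j) :
    qBinom Q j i * qBinom Q i k = qBinom Q j k * qBinom Q (j-k) (i-k) := by
  have e : (j-k) - (i-k) = j - i := by omega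
  rw [qBinom, qBinom, qBinom, qBinom, if_pos hij, if_pos hki, if_pos (le_trans hki hij),
    if_pos (by omega : i - k ≤ j - k), e]
  have h1 := qFact_ne hQ i
  have h2 := qFact_ne hQ (j-i)
  have h3 := qFact_ne hQ k
  have h4 := qFact_ne hQ (i-k)
  have h5 := qFact_ne hQ (j-k)
  field_simp

lemma key_orth (hQ : 2 ≤ Q) {k j : ℕ} (hkj : k ≤ j) :
    ∑ i ∈ Finset.Icc k j,
      (-1:ℚ)^(j+i) * Q^(((i+1).choose 2 : ℤ) - (j*i : ℤ)) * qBinom Q j i * qBinom Q i k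
    = if j = k then Q^(-(k.choose 2 : ℤ)) else 0 := by
  have hQ0 : Q ≠ 0 := by linarith
  obtain ⟨d, rfl⟩ : ∃ d, j = k + d := ⟨j - k, by omega⟩
  rw [show Finset.Icc k (k+d) = Finset.Ico k (k+d+1) by rw [Finset.Ico_add_one_right_eq_Icc],
    Finset.sum_Ico_eq_sum_range, show k + d + 1 - k = d + 1 by omega]
  set x : ℚ := Q ^ ((1:ℤ) - d) with hx
  have hpt : ∀ t ∈ Finset.range (d+1),
      (-1:ℚ)^((k+d)+(k+t)) * Q^((((k+t)+1).choose 2 : ℤ) - ((k+d : ℕ) : ℤ) * ((k+t : ℕ) : ℤ))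
        * qBinom Q (k+d) (k+t) * qBinom Q (k+t) k
      = ((-1:ℚ)^d * Q^(-((d*k : ℤ) + (k.choose 2 : ℤ))) * qBinom Q (k+d) k)
        * ((-1:ℚ)^t * Q^(t.choose 2) * qBinom Q d t * x^t) := by
    intro t ht
    have ht' : t ≤ d := Nat.lt_succ_iff.mp (Finset.mem_range.mp ht)
    have htri : qBinom Q (k+d) (k+t) * qBinom Q (k+t) k
        = qBinom Q (k+d) k * qBinom Q d t := by
      have := qBinom_trinom hQ (k := k) (i := k+t) (j := k+d)
        (by omega) (by omega : k+t ≤ k+d)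
      · simpa [Nat.add_sub_cancel_left, show k+d-k = d by omega, show k+t-k = t by omega]
          using this
    have hsign : (-1:ℚ)^((k+d)+(k+t)) = (-1:ℚ)^d * (-1:ℚ)^t := by
      have : (k+d)+(k+t) = 2*k + (d + t) := by ring
      rw [this, pow_add, pow_add, pow_mul]; norm_num
    have hexp : (((k+t)+1).choose 2 : ℤ) - ((k+d : ℕ) : ℤ) * ((k+t : ℕ) : ℤ)
        = -((d*k : ℤ) + (k.choose 2 : ℤ)) + (t.choose 2 : ℤ) + ((1:ℤ) - d) * t := by
      have h1 := c2 ((k+t)+1)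
      have h2 := c2 k
      have h3 := c2 t
      push_cast at h1 h2 h3 ⊢
      nlinarith [h1, h2, h3]
    have hxpow : x ^ t = Q ^ (((1:ℤ) - d) * t) := by
      rw [hx, ← zpow_natCast (Q ^ ((1:ℤ) - d)) t, ← zpow_mul]
    rw [mul_assoc, htri, hsign, hexp, hxpow, zpow_add₀ hQ0, zpow_add₀ hQ0,
      zpow_natCast]
    ring
  rw [Finset.sum_congr rfl hpt, ← Finset.mul_sum, qbinom_thm hQ d x]
  rcases Nat.eq_zero_or_pos d with rfl | hd
  · simp [qBinom_self hQ, zpow_neg]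
  · rw [if_neg (by omega)]
    have hzero : ∏ i ∈ Finset.range d, (1 - x * Q^i) = 0 := by
      apply Finset.prod_eq_zero (Finset.mem_range.mpr (by omega : d - 1 < d))
      rw [hx, ← zpow_natCast Q (d-1), ← zpow_add₀ hQ0]
      have : (1:ℤ) - d + (d-1 : ℕ) = 0 := by push_cast [Nat.cast_sub hd]; ring
      rw [this, zpow_zero]; ring
    rw [hzero, mul_zero]

end QAux

/-- For every board `B ⊆ [m]×[n]` with `m ≤ n`, every prime power `q`, and every
`0 ≤ k ≤ m`, the matrix counts can be recovered from the `q`-hit numbers: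
`M_k(B,q) = q^{C(k,2)-C(m,2)} ([n-m]!_q/[n-k]!_q) ∑_{i=k}^m H_i(B,q) [i choose k]_q`.
In particular `H_m(B,q) = M_m(B,q)`. -/
theorem stmt3 (m n : ℕ) (hm : 1 ≤ m) (hmn : m ≤ n)
    (q : ℕ) (F : Type) [Field F] [Fintype F] (hF : Fintype.card F = q)
    (B : Finset (Fin m × Fin n)) (k : ℕ) (hk : k ≤ m) :
    Mred F q B k =
      (q : ℚ) ^ ((k.choose 2 : ℤ) - (m.choose 2 : ℤ)) *
        (qFact (q : ℚ) (n - m) / qFact (q : ℚ) (n - k)) *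
        ∑ i ∈ Finset.Icc k m, qHit F q B i * qBinom (q : ℚ) i k
    ∧ qHit F q B m = Mred F q B m := by
  have hq2 : 2 ≤ q := by
    have : 1 < Fintype.card F := Fintype.one_lt_card
    omega
  have hQ : (2:ℚ) ≤ (q:ℚ) := by exact_mod_cast hq2
  have hQ0 : (q:ℚ) ≠ 0 := by positivity
  constructor
  · -- main inversion
    set Q : ℚ := (q:ℚ) with hQdef
    have hexpand : ∀ i ∈ Finset.Icc k m,
        Q ^ ((k.choose 2 : ℤ) - (m.choose 2 : ℤ)) * (qFact Q (n - m) / qFact Q (n - k)) *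
          (qHit F q B i * qBinom Q i k)
        = ∑ j ∈ Finset.Icc i m,
            Q ^ ((k.choose 2 : ℤ) - (m.choose 2 : ℤ)) * (qFact Q (n - m) / qFact Q (n - k)) *
            (Q ^ ((i + 1).choose 2 + m.choose 2) *
              (Mred F q B j * (qFact Q (n - j) / qFact Q (n - m)) *
                qBinom Q j i * (-1:ℚ) ^ (j + i) * Q ^ (-(j * i : ℤ))) * qBinom Q i k) := by
      intro i _
      rw [qHit, Finset.mul_sum, Finset.sum_mul, Finset.mul_sum]
    rw [Finset.mul_sum, Finset.sum_congr rfl hexpand]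
    rw [Finset.sum_comm' (t' := Finset.Icc k m) (s' := fun j => Finset.Icc k j)
      (fun i j => by simp only [Finset.mem_Icc]; omega)]
    have hinner : ∀ j ∈ Finset.Icc k m,
        (∑ i ∈ Finset.Icc k j,
          Q ^ ((k.choose 2 : ℤ) - (m.choose 2 : ℤ)) * (qFact Q (n - m) / qFact Q (n - k)) *
            (Q ^ ((i + 1).choose 2 + m.choose 2) *
              (Mred F q B j * (qFact Q (n - j) / qFact Q (n - m)) *
                qBinom Q j i * (-1:ℚ) ^ (j + i) * Q ^ (-(j * i : ℤ))) * qBinom Q i k))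
        = if j = k then Mred F q B k else 0 := by
      intro j hj
      obtain ⟨hkj, hjm⟩ := Finset.mem_Icc.mp hj
      have hf : qFact Q (n - m) / qFact Q (n - k) * (qFact Q (n - j) / qFact Q (n - m))
          = qFact Q (n - j) / qFact Q (n - k) := by
        rw [div_mul_div_comm, mul_comm (qFact Q (n - m)) (qFact Q (n - j)),
          mul_div_mul_right _ _ (qFact_ne hQ (n - m))]
      have hpt : ∀ i ∈ Finset.Icc k j,
          Q ^ ((k.choose 2 : ℤ) - (m.choose 2 : ℤ)) * (qFact Q (n - m) / qFact Q (n - k)) *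
            (Q ^ ((i + 1).choose 2 + m.choose 2) *
              (Mred F q B j * (qFact Q (n - j) / qFact Q (n - m)) *
                qBinom Q j i * (-1:ℚ) ^ (j + i) * Q ^ (-(j * i : ℤ))) * qBinom Q i k)
          = (Mred F q B j * (qFact Q (n - j) / qFact Q (n - k)) * Q ^ ((k.choose 2 : ℤ)))
            * ((-1:ℚ)^(j+i) * Q^(((i+1).choose 2 : ℤ) - (j*i : ℤ)) * qBinom Q j i
                * qBinom Q i k) := by
        intro i _
        have hpow : Q ^ ((k.choose 2 : ℤ) - (m.choose 2 : ℤ)) *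
            Q ^ ((i + 1).choose 2 + m.choose 2) * Q ^ (-(j * i : ℤ))
            = Q ^ ((k.choose 2 : ℤ)) * Q ^ (((i+1).choose 2 : ℤ) - (j*i : ℤ)) := by
          rw [← zpow_natCast Q ((i + 1).choose 2 + m.choose 2), ← zpow_add₀ hQ0,
            ← zpow_add₀ hQ0, ← zpow_add₀ hQ0]
          congr 1
          push_cast
          ring
        calc
          Q ^ ((k.choose 2 : ℤ) - (m.choose 2 : ℤ)) * (qFact Q (n - m) / qFact Q (n - k)) *
              (Q ^ ((i + 1).choose 2 + m.choose 2) *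
                (Mred F q B j * (qFact Q (n - j) / qFact Q (n - m)) *
                  qBinom Q j i * (-1:ℚ) ^ (j + i) * Q ^ (-(j * i : ℤ))) * qBinom Q i k)
            = (Q ^ ((k.choose 2 : ℤ) - (m.choose 2 : ℤ)) *
                Q ^ ((i + 1).choose 2 + m.choose 2) * Q ^ (-(j * i : ℤ))) *
              (qFact Q (n - m) / qFact Q (n - k) * (qFact Q (n - j) / qFact Q (n - m))) *
              (Mred F q B j * qBinom Q j i * (-1:ℚ) ^ (j + i) * qBinom Q i k) := by ring
          _ = _ := by rw [hpow, hf]; ring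
      rw [Finset.sum_congr rfl hpt, ← Finset.mul_sum, key_orth hQ hkj]
      rcases eq_or_ne j k with rfl | hne
      · rw [if_pos rfl, if_pos rfl]
        rw [div_self (qFact_ne hQ (n - j)), mul_one, mul_assoc,
          ← zpow_add₀ hQ0, add_neg_cancel, zpow_zero, mul_one]
      · rw [if_neg hne, if_neg hne, mul_zero]
    rw [Finset.sum_congr rfl hinner, Finset.sum_ite_eq' (Finset.Icc k m) k
      (fun _ => Mred F q B k), if_pos (Finset.mem_Icc.mpr ⟨le_rfl, hk⟩)]
  · -- H_m = M_m
    rw [qHit, Finset.Icc_self, Finset.sum_singleton, qBinom_self hQ,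
      div_self (qFact_ne hQ (n - m))]
    have hsign : ((-1:ℚ)) ^ (m + m) = 1 := by
      rw [show m + m = 2*m by ring, pow_mul]; norm_num
    rw [hsign]
    have hc : (((m + 1).choose 2 : ℤ) + (m.choose 2 : ℤ)) = ((m : ℤ) * m) := by
      have h1 := c2 (m+1)
      have h2 := c2 m
      push_cast at h1 h2 ⊢
      nlinarith [h1, h2]
    have hone : ((q:ℚ)) ^ ((m + 1).choose 2 + m.choose 2) * ((q:ℚ)) ^ (-(m * m : ℤ)) = 1 := by
      rw [← zpow_natCast (q:ℚ) ((m + 1).choose 2 + m.choose 2), ← zpow_add₀ hQ0]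
      rw [show (((m + 1).choose 2 + m.choose 2 : ℕ) : ℤ) + -((m : ℤ) * m) = 0 by
        push_cast at hc ⊢; linarith]
      exact zpow_zero _
    calc (q:ℚ) ^ ((m + 1).choose 2 + m.choose 2) *
          (Mred F q B m * 1 * 1 * 1 * (q:ℚ) ^ (-(m * m : ℤ)))
        = ((q:ℚ) ^ ((m + 1).choose 2 + m.choose 2) * (q:ℚ) ^ (-(m * m : ℤ))) *
          Mred F q B m := by ring
      _ = Mred F q B m := by rw [hone, one_mul]
end

section
/- For every board B ⊆ [m]×[n] with m ≤ n and every prime power q, (q−1)^m · Σ_{i=0}^{m} H_i(B,q) = (q^n−1)(q^n−q)···(q^n−q^{m−1}). -/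
open Finset

namespace QAux

variable {q : ℚ}

lemma qFact_pos (hq : 1 < q) (k : ℕ) : 0 < qFact q k := by
  unfold qFact
  apply Finset.prod_pos
  intro i _
  apply div_pos
  · have : (1:ℚ) < q ^ (i+1) := one_lt_pow₀ hq (by omega)
    linarith
  · linarith

lemma qFact_ne (hq : 1 < q) (k : ℕ) : qFact q k ≠ 0 := (qFact_pos hq k).ne'

lemma qFact_zero : qFact q 0 = 1 := by simp [qFact]

lemma qFact_succ (k : ℕ) : qFact q (k+1) = qFact q k * ((q ^ (k+1) - 1)/(q-1)) :=
  Finset.prod_range_succ _ _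

lemma qBinom_self (hq : 1 < q) (k : ℕ) : qBinom q k k = 1 := by
  simp [qBinom, qFact_zero, mul_one, div_self (qFact_ne hq k)]

lemma qBinom_zero_right (hq : 1 < q) (k : ℕ) : qBinom q k 0 = 1 := by
  simp [qBinom, qFact_zero, one_mul, div_self (qFact_ne hq k)]

lemma qBinom_gt {k l : ℕ} (h : k < l) : qBinom q k l = 0 :=
  if_neg (not_le.mpr h)

lemma qBinom_pascal (hq : 1 < q) (i k : ℕ) (hk : k ≤ i) :
    qBinom q (i+1) (k+1) = qBinom q i (k+1) + q ^ (i - k) * qBinom q i k := by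
  rcases eq_or_lt_of_le hk with rfl | hlt
  · simp [qBinom_self hq, qBinom_gt (Nat.lt_succ_self k)]
  · set d := i - k - 1 with hd
    have e1 : i + 1 - (k+1) = d + 1 := by omega
    have e2 : i - (k+1) = d := by omega
    have e3 : i - k = d + 1 := by omega
    rw [qBinom, qBinom, qBinom, if_pos (by omega), if_pos (by omega), if_pos (by omega),
      e1, e2, e3, qFact_succ i, qFact_succ k, qFact_succ d]
    have hpow : q ^ (i+1) = q ^ (d+1) * q ^ (k+1) := by
      rw [← pow_add]; congr 1; omega
    rw [hpow]
    have h1 : q - 1 ≠ 0 := by intro h; rw [sub_eq_zero] at h; exact absurd h.symm hq.ne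
    have h2 : q ^ (k+1) - 1 ≠ 0 := by
      have : (1:ℚ) < q ^ (k+1) := one_lt_pow₀ hq (by omega); intro h; rw [sub_eq_zero] at h; linarith
    have h3 : q ^ (d+1) - 1 ≠ 0 := by
      have : (1:ℚ) < q ^ (d+1) := one_lt_pow₀ hq (by omega); intro h; rw [sub_eq_zero] at h; linarith
    have h4 := qFact_ne hq i
    have h5 := qFact_ne hq k
    have h6 := qFact_ne hq d
    field_simp
    ring

lemma choose_succ_two (k : ℕ) : (k+1).choose 2 = k.choose 2 + k := by
  rw [Nat.choose_two_right, Nat.choose_two_right, Nat.add_sub_cancel]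
  exact Nat.triangle_succ k

lemma qbt (hq : 1 < q) (x : ℚ) (i : ℕ) :
    ∑ k ∈ range (i+1), (-1:ℚ)^k * q ^ (k.choose 2) * qBinom q i k * x ^ k
      = ∏ j ∈ range i, (1 - x * q ^ j) := by
  induction i with
  | zero => simp [qBinom_zero_right hq]
  | succ i ih =>
    set f : ℕ → ℚ := fun k => (-1:ℚ)^k * q ^ (k.choose 2) * qBinom q i k * x ^ k with hf
    set S : ℚ := ∑ k ∈ range (i+1), f k with hSdef
    have hf0 : f 0 = 1 := by simp [hf, qBinom_zero_right hq]
    have hftop : f (i+1) = 0 := by simp [hf, qBinom_gt (Nat.lt_succ_self i)]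
    have hshift : ∑ k ∈ range (i+1), f (k+1) = S - 1 := by
      rw [Finset.sum_range_succ]
      simp only [hftop, add_zero]
      have h := Finset.sum_range_succ' f i
      rw [hf0, ← hSdef] at h
      rw [h]; ring
    rw [Finset.prod_range_succ, ← ih]
    rw [Finset.sum_range_succ' (fun k => (-1:ℚ)^k * q ^ (k.choose 2) * qBinom q (i+1) k * x ^ k) (i+1)]
    have hterm : ∀ k ∈ range (i+1),
        (-1:ℚ)^(k+1) * q ^ ((k+1).choose 2) * qBinom q (i+1) (k+1) * x ^ (k+1)
          = f (k+1) + (-(x * q ^ i)) * f k := by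
      intro k hk
      have hki : k ≤ i := by simp [mem_range] at hk; omega
      have hpow : q ^ ((k+1).choose 2) * q ^ (i - k) = q ^ (k.choose 2) * q ^ i := by
        rw [← pow_add, ← pow_add]; congr 1; rw [choose_succ_two]; omega
      rw [qBinom_pascal hq i k hki]
      simp only [hf]
      linear_combination ((-1:ℚ)^(k+1) * x^(k+1) * qBinom q i k) * hpow
    rw [Finset.sum_congr rfl hterm, Finset.sum_add_distrib, hshift, ← Finset.mul_sum, ← hSdef]
    have h0 : (-1:ℚ)^0 * q ^ (Nat.choose 0 2) * qBinom q (i+1) 0 * x ^ 0 = 1 := by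
      simp [qBinom_zero_right hq]
    rw [h0]
    ring

lemma final_prod (hq : 1 < q) (m n : ℕ) (hmn : m ≤ n) :
    (q - 1) ^ m * (q ^ (m.choose 2) * (qFact q n / qFact q (n - m)))
      = ∏ i ∈ range m, (q ^ n - q ^ i) := by
  have hq1 : q - 1 ≠ 0 := by intro h; rw [sub_eq_zero] at h; exact absurd h.symm hq.ne
  have h1 : qFact q n = qFact q (n-m) * ∏ i ∈ range m, ((q ^ ((n-m)+i+1) - 1)/(q-1)) := by
    have h := Finset.prod_range_add (fun i => (q ^ (i + 1) - 1) / (q - 1)) (n-m) m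
    rw [show (n-m)+m = n by omega] at h
    exact h
  have hm0 : ((q-1)^m : ℚ) ≠ 0 := pow_ne_zero _ hq1
  have key : (q - 1) ^ m * (q ^ (m.choose 2) * (qFact q n / qFact q (n - m)))
      = q ^ (m.choose 2) * ∏ i ∈ range m, (q ^ ((n-m)+i+1) - 1) := by
    rw [h1, mul_div_cancel_left₀ _ (qFact_ne hq (n-m)), Finset.prod_div_distrib,
      Finset.prod_const]
    field_simp
    rw [Finset.card_range]; ring
  rw [key]
  have hsum : ∑ i ∈ range m, (m - 1 - i) = m.choose 2 := by
    rw [Finset.sum_range_reflect (fun i => i) m, Finset.sum_range_id, Nat.choose_two_right]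
  rw [show q ^ m.choose 2 = ∏ i ∈ range m, q ^ (m - 1 - i) by
    rw [Finset.prod_pow_eq_pow_sum, hsum]]
  rw [← Finset.prod_range_reflect (fun i => q ^ n - q ^ i) m]
  rw [← Finset.prod_mul_distrib]
  apply Finset.prod_congr rfl
  intro i hi
  have him : i < m := mem_range.mp hi
  have he : (m - 1 - i) + ((n-m)+i+1) = n := by omega
  rw [mul_sub, mul_one, ← pow_add, he]

end QAux


/-- For every board `B ⊆ [m]×[n]` with `m ≤ n` and every prime power `q`,
`(q-1)^m ∑_{i=0}^m H_i(B,q) = (q^n - 1)(q^n - q) ⋯ (q^n - q^{m-1})`. -/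
theorem stmt4 (m n : ℕ) (hm : 1 ≤ m) (hmn : m ≤ n)
    (q : ℕ) (F : Type) [Field F] [Fintype F] (hF : Fintype.card F = q)
    (B : Finset (Fin m × Fin n)) :
    ((q : ℚ) - 1) ^ m * ∑ i ∈ Finset.range (m + 1), qHit F q B i =
      ∏ i ∈ Finset.range m, ((q : ℚ) ^ n - (q : ℚ) ^ i) := by
  have hq2 : 1 < q := by rw [← hF]; exact Fintype.one_lt_card
  have hq : (1:ℚ) < (q:ℚ) := by exact_mod_cast hq2
  have hq0 : (q:ℚ) ≠ 0 := by positivity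
  -- M_0 = 1
  have hm0 : (mcount F B 0 : ℚ) = 1 := by
    have hrz : ∀ M : Matrix (Fin m) (Fin n) F, M.rank = 0 → M = 0 := by
      intro M h
      rw [Matrix.rank, Submodule.finrank_eq_zero, LinearMap.range_eq_bot] at h
      ext i j
      have := congrFun (LinearMap.congr_fun h (Pi.single j 1)) i
      simpa [Matrix.mulVecLin_apply, Matrix.mulVec_single] using this
    have : Nonempty {M : Matrix (Fin m) (Fin n) F // M.rank = 0 ∧ ∀ i j, (i, j) ∉ B → M i j = 0} :=
      ⟨⟨0, Matrix.rank_zero, fun _ _ _ => rfl⟩⟩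
    have : Subsingleton {M : Matrix (Fin m) (Fin n) F // M.rank = 0 ∧ ∀ i j, (i, j) ∉ B → M i j = 0} := by
      constructor
      rintro ⟨M, hM, -⟩ ⟨N, hN, -⟩
      exact Subtype.ext ((hrz M hM).trans (hrz N hN).symm)
    rw [mcount, Nat.card_unique]
    norm_num
  have hMred0 : Mred F q B 0 = 1 := by
    rw [Mred, pow_zero, div_one, hm0]
  -- swap the two sums
  have hswap : ∑ i ∈ Finset.range (m + 1), qHit F q B i
      = ∑ i ∈ Finset.range (m+1), ∑ k ∈ Finset.range (i+1),
          (q:ℚ) ^ ((k + 1).choose 2 + m.choose 2) *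
            (Mred F q B i * (qFact (q : ℚ) (n - i) / qFact (q : ℚ) (n - m)) *
              qBinom (q : ℚ) i k * (-1 : ℚ) ^ (i + k) * (q : ℚ) ^ (-(i * k : ℤ))) := by
    simp only [qHit, Finset.mul_sum]
    exact Finset.sum_comm' (by intro k i; simp only [mem_range, mem_Icc]; omega)
  rw [hswap]
  rw [Finset.sum_eq_single_of_mem 0 (by simp) ?hz]
  case hz =>
    intro i _ hi0
    have h1i : 1 ≤ i := Nat.one_le_iff_ne_zero.mpr hi0
    have hterm : ∀ k ∈ Finset.range (i+1),
        (q:ℚ) ^ ((k + 1).choose 2 + m.choose 2) *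
            (Mred F q B i * (qFact (q : ℚ) (n - i) / qFact (q : ℚ) (n - m)) *
              qBinom (q : ℚ) i k * (-1 : ℚ) ^ (i + k) * (q : ℚ) ^ (-(i * k : ℤ)))
          = (Mred F q B i * (qFact (q : ℚ) (n - i) / qFact (q : ℚ) (n - m)) * (-1:ℚ)^i
              * (q:ℚ) ^ (m.choose 2)) *
            ((-1:ℚ)^k * (q:ℚ) ^ (k.choose 2) * qBinom (q:ℚ) i k * ((q:ℚ) ^ ((1:ℤ) - i)) ^ k) := by
      intro k _
      have key : (q:ℚ) ^ ((k+1).choose 2) * (q:ℚ) ^ (-(i*k : ℤ))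
          = (q:ℚ) ^ (k.choose 2) * ((q:ℚ) ^ ((1:ℤ) - i)) ^ k := by
        rw [← zpow_natCast (q:ℚ) ((k+1).choose 2), ← zpow_natCast (q:ℚ) (k.choose 2),
          ← zpow_natCast ((q:ℚ) ^ ((1:ℤ) - i)) k, ← zpow_mul, ← zpow_add₀ hq0, ← zpow_add₀ hq0]
        congr 1
        have hc : (((k+1).choose 2 : ℕ) : ℤ) = (k.choose 2 : ℕ) + k := by
          exact_mod_cast QAux.choose_succ_two k
        rw [hc]; ring
      rw [pow_add]
      linear_combination (Mred F q B i * (qFact (q : ℚ) (n - i) / qFact (q : ℚ) (n - m)) *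
        qBinom (q:ℚ) i k * (-1:ℚ)^(i+k) * (q:ℚ) ^ (m.choose 2)) * key
    rw [Finset.sum_congr rfl hterm, ← Finset.mul_sum, QAux.qbt hq _ i]
    have hmem : i - 1 ∈ Finset.range i := by simp; omega
    have hfac : 1 - (q:ℚ) ^ ((1:ℤ) - i) * (q:ℚ) ^ (i-1 : ℕ) = 0 := by
      rw [← zpow_natCast (q:ℚ) (i-1 : ℕ), ← zpow_add₀ hq0]
      rw [show ((1:ℤ) - i) + ((i - 1 : ℕ) : ℤ) = 0 by push_cast [h1i]; ring]
      simp
    rw [Finset.prod_eq_zero hmem hfac, mul_zero]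
  · -- the i = 0 term
    rw [Finset.sum_range_one]
    have e0 : qBinom (q:ℚ) 0 0 = 1 := QAux.qBinom_zero_right hq 0
    have e1 : ((0:ℕ)+1).choose 2 = 0 := by decide
    simp only [Nat.sub_zero, e0, hMred0, e1, zero_add, add_zero, pow_zero, one_mul, mul_one,
      Nat.cast_ofNat, CharP.cast_eq_zero, mul_zero, zero_mul, neg_zero, zpow_zero]
    exact QAux.final_prod hq m n hmn
end

section
/- For every board B ⊆ [m]×[n] with the NE property, every prime power q, and every 0 ≤ r ≤ m, the number of m×n matrices over F_q of rank r with support in B equals 𝔪_r(B, q) = (q−1)^r · Σ_c q^{|B| − r − inv^NE_B(c)}, where the sum is over all placements c of r non-attacking rooks on B; equivalently 𝔪_r(B,q) = (q−1)^r q^{|B|−r} R^NE_r(B, q^{−1}). -/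
open Finset

/-! ### Auxiliary material for `stmt10` -/

namespace Stmt10Aux

open Matrix

lemma val_unContract {m : ℕ} (a : Fin m) (x : Fin (m - 1)) :
    ((unContract a x : Fin m) : ℕ) = if (x : ℕ) < (a : ℕ) then (x : ℕ) else (x : ℕ) + 1 := by
  unfold unContract; split_ifs <;> rfl

/-- The inverse of `unContract`: relabel `i ≠ a` as an element of `Fin (m-1)`. -/
def con {m : ℕ} (a i : Fin m) (h : i ≠ a) : Fin (m - 1) :=
  if hlt : (i : ℕ) < (a : ℕ) then ⟨i, by omega⟩
  else ⟨(i : ℕ) - 1, by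
    have h1 : (i : ℕ) ≠ (a : ℕ) := fun hh => h (Fin.ext hh)
    have := i.isLt; omega⟩

lemma val_con {m : ℕ} (a i : Fin m) (h : i ≠ a) :
    ((con a i h : Fin (m - 1)) : ℕ) = if (i : ℕ) < (a : ℕ) then (i : ℕ) else (i : ℕ) - 1 := by
  unfold con; split_ifs <;> rfl

lemma unContract_con {m : ℕ} (a i : Fin m) (h : i ≠ a) :
    unContract a (con a i h) = i := by
  have h1 : (i : ℕ) ≠ (a : ℕ) := fun hh => h (Fin.ext hh)
  apply Fin.ext
  rw [val_unContract, val_con]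
  split_ifs <;> omega

lemma unContract_ne {m : ℕ} (a : Fin m) (x : Fin (m - 1)) : unContract a x ≠ a := by
  intro hh
  have := congrArg Fin.val hh
  rw [val_unContract] at this
  have := x.isLt
  split_ifs at * <;> omega

lemma unContract_inj {m : ℕ} (a : Fin m) : Function.Injective (unContract a) := by
  intro x y hxy
  have := congrArg Fin.val hxy
  rw [val_unContract, val_unContract] at this
  apply Fin.ext
  split_ifs at this <;> omega

lemma con_unContract {m : ℕ} (a : Fin m) (x : Fin (m - 1)) :
    con a (unContract a x) (unContract_ne a x) = x :=
  unContract_inj a (unContract_con a (unContract a x) (unContract_ne a x))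

lemma unContract_lt_iff {m : ℕ} (a : Fin m) (x y : Fin (m - 1)) :
    unContract a x < unContract a y ↔ x < y := by
  rw [Fin.lt_def, Fin.lt_def, val_unContract, val_unContract]
  split_ifs <;> omega

lemma unContract_eq_iff {m : ℕ} (a : Fin m) (x y : Fin (m - 1)) :
    unContract a x = unContract a y ↔ x = y :=
  ⟨fun h => unContract_inj a h, fun h => by rw [h]⟩

section RankLemmas

variable {F : Type} [Field F] [Fintype F]
set_option linter.unusedSectionVars false

/-- Over a field, a matrix has rank zero iff it is zero. -/
lemma rank_eq_zero_iff' {m n : ℕ} (M : Matrix (Fin m) (Fin n) F) :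
    M.rank = 0 ↔ M = 0 := by
  constructor
  · intro h
    have hrange : LinearMap.range M.mulVecLin = ⊥ := by
      have := Submodule.finrank_eq_zero (R := F) (M := Fin m → F)
        (S := LinearMap.range M.mulVecLin)
      rw [← this]; exact h
    ext i j
    have h1 : M.mulVec (Pi.single j 1) ∈ LinearMap.range M.mulVecLin :=
      ⟨Pi.single j 1, rfl⟩
    rw [hrange, Submodule.mem_bot] at h1
    have := congrFun h1 i
    rw [Matrix.mulVec_single] at this
    simpa using this
  · rintro rfl; exact Matrix.rank_zero

/-- Deleting zero columns does not change the rank. -/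
lemma rank_delete_cols {m n k : ℕ} (N : Matrix (Fin m) (Fin n) F)
    (f : Fin k → Fin n) (hf : Function.Injective f)
    (h0 : ∀ j : Fin n, (∀ t, f t ≠ j) → ∀ i, N i j = 0) :
    (N.submatrix id f).rank = N.rank := by
  classical
  set P : Matrix (Fin k) (Fin n) F := Matrix.of fun t j => if f t = j then 1 else 0 with hP
  have h1 : N.submatrix id f = N * Pᵀ := by
    ext i t
    simp only [Matrix.submatrix_apply, id, Matrix.mul_apply, Matrix.transpose_apply, hP,
      Matrix.of_apply]
    rw [Finset.sum_eq_single (f t)]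
    · simp
    · intro j _ hj; simp [Ne.symm hj]
    · intro h; exact absurd (Finset.mem_univ _) h
  have h2 : (N.submatrix id f) * P = N := by
    ext i j
    simp only [Matrix.mul_apply, Matrix.submatrix_apply, id, hP, Matrix.of_apply]
    by_cases hj : ∃ t, f t = j
    · obtain ⟨t0, ht0⟩ := hj
      rw [Finset.sum_eq_single t0]
      · simp [ht0]
      · intro t _ ht
        have : f t ≠ j := fun hh => ht (hf (by rw [hh, ht0]))
        simp [this]
      · intro h; exact absurd (Finset.mem_univ _) h
    · push_neg at hj
      rw [h0 j hj i, Finset.sum_eq_zero]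
      intro t _; simp [hj t]
  apply le_antisymm
  · rw [h1]; exact Matrix.rank_mul_le_left N Pᵀ
  · conv_lhs => rw [← h2]
    exact Matrix.rank_mul_le_left _ P
/-- Deleting zero rows and zero columns does not change the rank. -/
lemma rank_delete_rows_cols {m n k l : ℕ} (N : Matrix (Fin m) (Fin n) F)
    (g : Fin l → Fin m) (f : Fin k → Fin n)
    (hg : Function.Injective g) (hf : Function.Injective f)
    (hrow : ∀ i : Fin m, (∀ t, g t ≠ i) → ∀ j, N i j = 0)
    (hcol : ∀ j : Fin n, (∀ t, f t ≠ j) → ∀ i, N i j = 0) :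
    (N.submatrix g f).rank = N.rank := by
  have step1 : (N.submatrix id f).rank = N.rank := rank_delete_cols N f hf hcol
  have step2 : ((N.submatrix id f).submatrix g id).rank = (N.submatrix id f).rank := by
    have h1 : (N.submatrix id f).submatrix g id = ((N.submatrix id f)ᵀ.submatrix id g)ᵀ := by
      ext i j; simp
    rw [h1, Matrix.rank_transpose, ← Matrix.rank_transpose (N.submatrix id f)]
    apply rank_delete_cols _ g hg
    intro i hi j
    simp only [Matrix.transpose_apply, Matrix.submatrix_apply, id]
    exact hrow i hi (f j)
  have h3 : (N.submatrix id f).submatrix g id = N.submatrix g f := by ext i j; simp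
  rw [← h3, step2, step1]

/-- Pivoting: clearing the row and column of a nonzero entry drops the rank by one. -/
lemma rank_pivot {m n : ℕ} (M : Matrix (Fin m) (Fin n) F) (a : Fin m) (b : Fin n)
    (hp : M a b ≠ 0) :
    M.rank = (Matrix.of fun i j => M i j - M i b * (M a b)⁻¹ * M a j).rank + 1 := by
  classical
  set N : Matrix (Fin m) (Fin n) F :=
    Matrix.of fun i j => M i j - M i b * (M a b)⁻¹ * M a j with hN
  set u : Fin m → F := fun i => M i b with hu
  have key : ∀ x : Fin n → F,
      N.mulVec x = M.mulVec x - ((M a b)⁻¹ * (M a ⬝ᵥ x)) • u := by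
    intro x
    funext i
    simp only [Matrix.mulVec, dotProduct, hN, Matrix.of_apply, Pi.sub_apply,
      Pi.smul_apply, smul_eq_mul, hu, sub_mul, Finset.sum_sub_distrib]
    congr 1
    rw [Finset.mul_sum, Finset.sum_mul]
    apply Finset.sum_congr rfl
    intro j _; ring
  have hu_mem : u ∈ LinearMap.range M.mulVecLin := by
    refine ⟨Pi.single b 1, ?_⟩
    funext i
    rw [Matrix.mulVecLin_apply, Matrix.mulVec_single]
    simp [hu]
  have hrange : LinearMap.range M.mulVecLin =
      LinearMap.range N.mulVecLin ⊔ Submodule.span F {u} := by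
    apply le_antisymm
    · rintro _ ⟨x, rfl⟩
      rw [Matrix.mulVecLin_apply]
      have : M.mulVec x = N.mulVec x + ((M a b)⁻¹ * (M a ⬝ᵥ x)) • u := by
        rw [key]; abel
      rw [this]
      exact Submodule.add_mem _
        (Submodule.mem_sup_left ⟨x, rfl⟩)
        (Submodule.mem_sup_right (Submodule.smul_mem _ _ (Submodule.mem_span_singleton_self u)))
    · rw [sup_le_iff]
      constructor
      · rintro _ ⟨x, rfl⟩
        rw [Matrix.mulVecLin_apply, key]
        refine Submodule.sub_mem _ ⟨x, rfl⟩ (Submodule.smul_mem _ _ hu_mem)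
      · rw [Submodule.span_le, Set.singleton_subset_iff]
        exact hu_mem
  have hnot : u ∉ LinearMap.range N.mulVecLin := by
    rintro ⟨x, hx⟩
    have h1 : N.mulVec x a = 0 := by
      rw [key]
      simp only [Pi.sub_apply, Pi.smul_apply, smul_eq_mul, hu]
      have : M.mulVec x a = M a ⬝ᵥ x := rfl
      rw [this]
      field_simp
      ring
    rw [Matrix.mulVecLin_apply] at hx
    have h2 : u a = 0 := by rw [← hx]; exact h1
    exact hp (by simpa [hu] using h2)
  have hdisj : LinearMap.range N.mulVecLin ⊓ Submodule.span F {u} = ⊥ := by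
    rw [Submodule.eq_bot_iff]
    intro y hy
    obtain ⟨hy1, hy2⟩ := Submodule.mem_inf.mp hy
    rw [Submodule.mem_span_singleton] at hy2
    obtain ⟨c, rfl⟩ := hy2
    by_cases hc : c = 0
    · rw [hc, zero_smul]
    · exfalso
      apply hnot
      have : u = c⁻¹ • (c • u) := by rw [smul_smul, inv_mul_cancel₀ hc, one_smul]
      rw [this]
      exact Submodule.smul_mem _ _ hy1
  have hfin : Module.finrank F
      (LinearMap.range N.mulVecLin ⊔ Submodule.span F {u} : Submodule F (Fin m → F)) =
      N.rank + 1 := by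
    have := Submodule.finrank_sup_add_finrank_inf_eq
      (LinearMap.range N.mulVecLin) (Submodule.span F {u})
    rw [hdisj] at this
    have hu0 : u ≠ 0 := fun hh => hp (by simpa [hu] using congrFun hh a)
    rw [finrank_span_singleton hu0] at this
    simpa [Matrix.rank] using this
  rw [Matrix.rank, hrange, hfin]

end RankLemmas

section Corner

variable {m n : ℕ}

lemma corner_row {B : Finset (Fin m × Fin n)} {a : Fin m} {b : Fin n}
    (hc : isSWCorner B (a, b)) {j : Fin n} (hj : (a, j) ∈ B) (hne : j ≠ b) : b < j := by
  rcases lt_or_ge b j with h | h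
  · exact h
  · exfalso
    exact hc.2 (a, j) hj (by simp [Prod.ext_iff, hne]) ⟨le_refl a, h⟩

lemma corner_col {B : Finset (Fin m × Fin n)} {a : Fin m} {b : Fin n}
    (hc : isSWCorner B (a, b)) {i : Fin m} (hi : (i, b) ∈ B) (hne : i ≠ a) : i < a := by
  rcases lt_or_ge i a with h | h
  · exact h
  · exfalso
    exact hc.2 (i, b) hi (by simp [Prod.ext_iff, hne]) ⟨h, le_refl b⟩

lemma corner_cross {B : Finset (Fin m × Fin n)} {a : Fin m} {b : Fin n}
    (hB : hasNE B) (hc : isSWCorner B (a, b)) {i : Fin m} {j : Fin n}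
    (hib : (i, b) ∈ B) (haj : (a, j) ∈ B) (hi : i ≠ a) (hj : j ≠ b) : (i, j) ∈ B :=
  hB i a b j (corner_col hc hib hi) (corner_row hc haj hj) hib hc.1 haj

lemma mem_contractBoard {B : Finset (Fin m × Fin n)} {a : Fin m} {b : Fin n}
    {p : Fin (m - 1) × Fin (n - 1)} :
    p ∈ contractBoard B a b ↔ (unContract a p.1, unContract b p.2) ∈ B := by
  simp [contractBoard]

end Corner

section Decompose

variable {F : Type} [Field F] [Fintype F]
variable {m n : ℕ}

/-- Reconstruct a matrix from pivot value, column values, row values and contracted matrix. -/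
def build (B : Finset (Fin m × Fin n)) (a : Fin m) (b : Fin n)
    (x : F) (cv : {i : Fin m // (i, b) ∈ B ∧ i ≠ a} → F)
    (rv : {j : Fin n // (a, j) ∈ B ∧ j ≠ b} → F)
    (M' : Matrix (Fin (m - 1)) (Fin (n - 1)) F) : Matrix (Fin m) (Fin n) F :=
  Matrix.of fun i j =>
    if hi : i = a then
      (if hj : j = b then x else if h : (a, j) ∈ B then rv ⟨j, h, hj⟩ else 0)
    else if hj : j = b then (if h : (i, b) ∈ B then cv ⟨i, h, hi⟩ else 0)
    else M' (con a i hi) (con b j hj) +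
      (if h : (i, b) ∈ B then cv ⟨i, h, hi⟩ else 0) * x⁻¹ *
      (if h : (a, j) ∈ B then rv ⟨j, h, hj⟩ else 0)

variable {B : Finset (Fin m × Fin n)} {a : Fin m} {b : Fin n}
  {x : F} {cv : {i : Fin m // (i, b) ∈ B ∧ i ≠ a} → F}
  {rv : {j : Fin n // (a, j) ∈ B ∧ j ≠ b} → F}
  {M' : Matrix (Fin (m - 1)) (Fin (n - 1)) F}

lemma build_ab : build B a b x cv rv M' a b = x := by simp [build]

lemma build_row {j : Fin n} (hj : j ≠ b) :
    build B a b x cv rv M' a j = if h : (a, j) ∈ B then rv ⟨j, h, hj⟩ else 0 := by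
  simp [build, hj]

lemma build_col {i : Fin m} (hi : i ≠ a) :
    build B a b x cv rv M' i b = if h : (i, b) ∈ B then cv ⟨i, h, hi⟩ else 0 := by
  simp [build, hi]

lemma build_inner {i : Fin m} {j : Fin n} (hi : i ≠ a) (hj : j ≠ b) :
    build B a b x cv rv M' i j = M' (con a i hi) (con b j hj) +
      (if h : (i, b) ∈ B then cv ⟨i, h, hi⟩ else 0) * x⁻¹ *
      (if h : (a, j) ∈ B then rv ⟨j, h, hj⟩ else 0) := by
  simp [build, hi, hj]

lemma build_supp (hB : hasNE B) (hc : isSWCorner B (a, b))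
    (hM' : ∀ s t, (s, t) ∉ contractBoard B a b → M' s t = 0) :
    ∀ i j, (i, j) ∉ B → build B a b x cv rv M' i j = 0 := by
  intro i j hij
  by_cases hi : i = a
  · subst hi
    by_cases hj : j = b
    · subst hj; exact absurd hc.1 hij
    · rw [build_row hj]; rw [dif_neg hij]
  · by_cases hj : j = b
    · subst hj; rw [build_col hi, dif_neg hij]
    · rw [build_inner hi hj]
      have h1 : M' (con a i hi) (con b j hj) = 0 := by
        apply hM'
        rw [mem_contractBoard]
        simpa [unContract_con] using hij
      have h2 : (if h : (i, b) ∈ B then cv ⟨i, h, hi⟩ else 0) * x⁻¹ *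
          (if h : (a, j) ∈ B then rv ⟨j, h, hj⟩ else 0) = 0 := by
        by_cases hib : (i, b) ∈ B
        · by_cases haj : (a, j) ∈ B
          · exact absurd (corner_cross hB hc hib haj hi hj) hij
          · rw [dif_neg haj, mul_zero]
        · rw [dif_neg hib, zero_mul, zero_mul]
      rw [h1, h2, zero_add]

lemma build_rank (hx : x ≠ 0) :
    (build B a b x cv rv M' : Matrix (Fin m) (Fin n) F).rank = M'.rank + 1 := by
  have hp : build B a b x cv rv M' a b ≠ 0 := by rw [build_ab]; exact hx
  rw [rank_pivot (build B a b x cv rv M') a b hp]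
  congr 1
  set N : Matrix (Fin m) (Fin n) F :=
    Matrix.of fun i j => build B a b x cv rv M' i j -
      build B a b x cv rv M' i b * (build B a b x cv rv M' a b)⁻¹ *
        build B a b x cv rv M' a j with hN
  have hrowa : ∀ j, N a j = 0 := by
    intro j
    rw [hN]
    show build B a b x cv rv M' a j -
      build B a b x cv rv M' a b * (build B a b x cv rv M' a b)⁻¹ *
        build B a b x cv rv M' a j = 0
    rw [mul_inv_cancel₀ hp, one_mul, sub_self]
  have hcolb : ∀ i, N i b = 0 := by
    intro i
    rw [hN]
    show build B a b x cv rv M' i b -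
      build B a b x cv rv M' i b * (build B a b x cv rv M' a b)⁻¹ *
        build B a b x cv rv M' a b = 0
    rw [mul_assoc, inv_mul_cancel₀ hp, mul_one, sub_self]
  have hsub : N.submatrix (unContract a) (unContract b) = M' := by
    ext s t
    have hia : unContract a s ≠ a := unContract_ne a s
    have hjb : unContract b t ≠ b := unContract_ne b t
    rw [hN]
    show build B a b x cv rv M' (unContract a s) (unContract b t) -
      build B a b x cv rv M' (unContract a s) b * (build B a b x cv rv M' a b)⁻¹ *
        build B a b x cv rv M' a (unContract b t) = M' s t
    rw [build_inner hia hjb, build_col hia, build_row hjb, build_ab]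
    rw [con_unContract, con_unContract]
    ring
  have hrow : ∀ i : Fin m, (∀ t, unContract a t ≠ i) → ∀ j, N i j = 0 := by
    intro i hi j
    have hia : i = a := by
      by_contra hne
      exact hi (con a i hne) (unContract_con a i hne)
    rw [hia]; exact hrowa j
  have hcol : ∀ j : Fin n, (∀ t, unContract b t ≠ j) → ∀ i, N i j = 0 := by
    intro j hj i
    have hjb : j = b := by
      by_contra hne
      exact hj (con b j hne) (unContract_con b j hne)
    rw [hjb]; exact hcolb i
  rw [← hsub]
  exact (rank_delete_rows_cols N (unContract a) (unContract b)
    (unContract_inj a) (unContract_inj b) hrow hcol).symm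

end Decompose

section Decompose2
variable {F : Type} [Field F] [Fintype F]
variable {m n : ℕ} {B : Finset (Fin m × Fin n)} {a : Fin m} {b : Fin n}

/-- The decomposition equivalence at a SW corner. -/
noncomputable def decompose (hB : hasNE B) (hc : isSWCorner B (a, b)) :
    {M : Matrix (Fin m) (Fin n) F //
        (∀ i j, (i, j) ∉ B → M i j = 0) ∧ M a b ≠ 0} ≃
    {x : F // x ≠ 0} × ({i : Fin m // (i, b) ∈ B ∧ i ≠ a} → F) ×
      ({j : Fin n // (a, j) ∈ B ∧ j ≠ b} → F) ×
      {M' : Matrix (Fin (m - 1)) (Fin (n - 1)) F //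
        ∀ s t, (s, t) ∉ contractBoard B a b → M' s t = 0} where
  toFun M := ⟨⟨M.1 a b, M.2.2⟩, fun i => M.1 i.1 b, fun j => M.1 a j.1,
    ⟨Matrix.of fun s t => M.1 (unContract a s) (unContract b t) -
        M.1 (unContract a s) b * (M.1 a b)⁻¹ * M.1 a (unContract b t), by
      intro s t hst
      rw [mem_contractBoard] at hst
      simp only [Matrix.of_apply]
      rw [M.2.1 _ _ hst]
      have h2 : M.1 (unContract a s) b * (M.1 a b)⁻¹ * M.1 a (unContract b t) = 0 := by
        by_cases hib : (unContract a s, b) ∈ B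
        · by_cases haj : (a, unContract b t) ∈ B
          · exact absurd (corner_cross hB hc hib haj (unContract_ne a s) (unContract_ne b t))
              hst
          · rw [M.2.1 _ _ haj, mul_zero]
        · rw [M.2.1 _ _ hib, zero_mul, zero_mul]
      rw [h2, sub_zero]⟩⟩
  invFun y := ⟨build B a b y.1.1 y.2.1 y.2.2.1 y.2.2.2.1,
    build_supp hB hc y.2.2.2.2, by rw [build_ab]; exact y.1.2⟩
  left_inv := by
    rintro ⟨M, hsupp, hne⟩
    apply Subtype.ext
    ext i j
    show build B a b (M a b) _ _ _ i j = M i j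
    by_cases hi : i = a
    · rw [hi]
      by_cases hj : j = b
      · rw [hj, build_ab]
      · rw [build_row hj]
        by_cases h : (a, j) ∈ B
        · rw [dif_pos h]
        · rw [dif_neg h, hsupp _ _ h]
    · by_cases hj : j = b
      · rw [hj, build_col hi]
        by_cases h : (i, b) ∈ B
        · rw [dif_pos h]
        · rw [dif_neg h, hsupp _ _ h]
      · rw [build_inner hi hj]
        simp only [Matrix.of_apply, unContract_con]
        have hcv : (if h : (i, b) ∈ B then M i b else 0) = M i b := by
          by_cases h : (i, b) ∈ B
          · rw [dif_pos h]
          · rw [dif_neg h, hsupp _ _ h]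
        have hrv : (if h : (a, j) ∈ B then M a j else 0) = M a j := by
          by_cases h : (a, j) ∈ B
          · rw [dif_pos h]
          · rw [dif_neg h, hsupp _ _ h]
        rw [hcv, hrv]
        ring
  right_inv := by
    rintro ⟨⟨x, hx⟩, cv, rv, ⟨M', hM'⟩⟩
    have hab : build B a b x cv rv M' a b = x := build_ab
    refine Prod.ext (Subtype.ext hab) (Prod.ext ?_ (Prod.ext ?_ ?_))
    · funext i
      show build B a b x cv rv M' i.1 b = cv i
      rw [build_col i.2.2, dif_pos i.2.1]
    · funext j
      show build B a b x cv rv M' a j.1 = rv j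
      rw [build_row j.2.2, dif_pos j.2.1]
    · apply Subtype.ext
      show Matrix.of _ = M'
      ext s t
      simp only [Matrix.of_apply]
      rw [hab]
      rw [build_inner (unContract_ne a s) (unContract_ne b t)]
      rw [build_col (unContract_ne a s), build_row (unContract_ne b t)]
      rw [con_unContract, con_unContract]
      ring

lemma decompose_rank (hB : hasNE B) (hc : isSWCorner B (a, b))
    (M : {M : Matrix (Fin m) (Fin n) F // (∀ i j, (i, j) ∉ B → M i j = 0) ∧ M a b ≠ 0}) :
    M.1.rank = ((decompose hB hc M).2.2.2.1).rank + 1 := by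
  obtain ⟨y, rfl⟩ : ∃ y, (decompose hB hc).symm y = M :=
    ⟨decompose hB hc M, (decompose hB hc).symm_apply_apply M⟩
  rw [Equiv.apply_symm_apply]
  exact build_rank y.1.2

end Decompose2

section CountHelpers

lemma card_split {α : Type} [Fintype α] (p q : α → Prop) :
    Nat.card {x // p x} = Nat.card {x // p x ∧ q x} + Nat.card {x // p x ∧ ¬ q x} := by
  classical
  rw [Nat.card_eq_fintype_card, Nat.card_eq_fintype_card, Nat.card_eq_fintype_card,
    Fintype.card_subtype, Fintype.card_subtype, Fintype.card_subtype]
  have h1 : (Finset.univ.filter fun x => p x ∧ q x) = (Finset.univ.filter p).filter q := by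
    rw [Finset.filter_filter]
  have h2 : (Finset.univ.filter fun x => p x ∧ ¬ q x) = (Finset.univ.filter p).filter
      fun x => ¬ q x := by
    rw [Finset.filter_filter]
  rw [h1, h2, Finset.card_filter_add_card_filter_not]

lemma card_shuffle {α : Type} (p q : α → Prop) :
    Nat.card {x : {y // p y} // q x.1} = Nat.card {x // q x ∧ p x} :=
  Nat.card_congr ⟨fun x => ⟨x.1.1, x.2, x.1.2⟩, fun x => ⟨⟨x.1, x.2.2⟩, x.2.1⟩,
    fun _ => rfl, fun _ => rfl⟩

lemma card_prod4 {A B C D : Type} (P : D → Prop) :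
    Nat.card {y : A × B × C × D // P y.2.2.2} =
      Nat.card A * Nat.card B * Nat.card C * Nat.card {d // P d} := by
  have e : {y : A × B × C × D // P y.2.2.2} ≃ A × B × C × {d // P d} :=
    ⟨fun y => (y.1.1, y.1.2.1, y.1.2.2.1, ⟨y.1.2.2.2, y.2⟩),
     fun z => ⟨(z.1, z.2.1, z.2.2.1, z.2.2.2.1), z.2.2.2.2⟩,
     fun y => rfl, fun z => rfl⟩
  rw [Nat.card_congr e, Nat.card_prod, Nat.card_prod, Nat.card_prod, mul_assoc, mul_assoc]

end CountHelpers

section MatrixCount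

variable (F : Type) [Field F] [Fintype F]
variable {m n : ℕ} {B : Finset (Fin m × Fin n)} {a : Fin m} {b : Fin n}

lemma mcount_zero (B : Finset (Fin m × Fin n)) : mcount F B 0 = 1 := by
  haveI : Unique {M : Matrix (Fin m) (Fin n) F //
      M.rank = 0 ∧ ∀ i j, (i, j) ∉ B → M i j = 0} :=
    { default := ⟨0, Matrix.rank_zero, fun _ _ _ => rfl⟩
      uniq := fun M => Subtype.ext ((rank_eq_zero_iff' M.1).mp M.2.1) }
  exact Nat.card_unique

lemma mcount_empty {r : ℕ} (hr : 1 ≤ r) : mcount F (∅ : Finset (Fin m × Fin n)) r = 0 := by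
  haveI : IsEmpty {M : Matrix (Fin m) (Fin n) F //
      M.rank = r ∧ ∀ i j, (i, j) ∉ (∅ : Finset (Fin m × Fin n)) → M i j = 0} := by
    constructor
    rintro ⟨M, hrank, hsupp⟩
    have hM : M = 0 := by
      ext i j; exact hsupp i j (Finset.notMem_empty _)
    rw [hM, Matrix.rank_zero] at hrank
    omega
  exact Nat.card_of_isEmpty

lemma card_colC :
    Fintype.card {i : Fin m // (i, b) ∈ B ∧ i ≠ a} =
      (B.filter fun p => p.2 = b ∧ p.1 ≠ a).card := by
  classical
  rw [Fintype.card_subtype]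
  apply Finset.card_bij (fun i _ => (i, b))
  · intro i hi
    simp only [Finset.mem_filter, Finset.mem_univ, true_and] at hi
    simp [Finset.mem_filter, hi.1, hi.2]
  · intro i _ i' _ h
    exact (Prod.ext_iff.mp h).1
  · intro p hp
    simp only [Finset.mem_filter] at hp
    refine ⟨p.1, ?_, ?_⟩
    · simp only [Finset.mem_filter, Finset.mem_univ, true_and]
      constructor
      · rw [← hp.2.1]; exact hp.1
      · exact hp.2.2
    · rw [← hp.2.1]

lemma card_rowC :
    Fintype.card {j : Fin n // (a, j) ∈ B ∧ j ≠ b} =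
      (B.filter fun p => p.1 = a ∧ p.2 ≠ b).card := by
  classical
  rw [Fintype.card_subtype]
  apply Finset.card_bij (fun j _ => (a, j))
  · intro j hj
    simp only [Finset.mem_filter, Finset.mem_univ, true_and] at hj
    simp [Finset.mem_filter, hj.1, hj.2]
  · intro j _ j' _ h
    exact (Prod.ext_iff.mp h).2
  · intro p hp
    simp only [Finset.mem_filter] at hp
    refine ⟨p.2, ?_, ?_⟩
    · simp only [Finset.mem_filter, Finset.mem_univ, true_and]
      constructor
      · rw [← hp.2.1]; exact hp.1
      · exact hp.2.2
    · rw [← hp.2.1]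

lemma mcount_rec (hB : hasNE B) (hc : isSWCorner B (a, b)) {r : ℕ} (hr : 1 ≤ r) :
    mcount F B r = mcount F (B.erase (a, b)) r +
      (Fintype.card F - 1) * Fintype.card F ^
        ((B.filter fun p => p.2 = b ∧ p.1 ≠ a).card +
          (B.filter fun p => p.1 = a ∧ p.2 ≠ b).card) *
        mcount F (contractBoard B a b) (r - 1) := by
  classical
  have hsplit := card_split
    (fun M : Matrix (Fin m) (Fin n) F => M.rank = r ∧ ∀ i j, (i, j) ∉ B → M i j = 0)
    (fun M => M a b = 0)
  have hA : Nat.card {M : Matrix (Fin m) (Fin n) F //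
      (M.rank = r ∧ ∀ i j, (i, j) ∉ B → M i j = 0) ∧ M a b = 0} =
      mcount F (B.erase (a, b)) r := by
    apply Nat.card_congr
    apply Equiv.subtypeEquivRight
    intro M
    constructor
    · rintro ⟨⟨hrank, hsupp⟩, hab⟩
      refine ⟨hrank, fun i j hij => ?_⟩
      by_cases hh : (i, j) = (a, b)
      · rw [Prod.mk.injEq] at hh
        rw [hh.1, hh.2]; exact hab
      · apply hsupp
        intro hmem
        exact hij (Finset.mem_erase.mpr ⟨hh, hmem⟩)
    · rintro ⟨hrank, hsupp⟩
      refine ⟨⟨hrank, fun i j hij => hsupp i j fun hmem => hij (Finset.mem_of_mem_erase hmem)⟩,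
        hsupp a b (Finset.notMem_erase _ _)⟩
  have hB2 : Nat.card {M : Matrix (Fin m) (Fin n) F //
      (M.rank = r ∧ ∀ i j, (i, j) ∉ B → M i j = 0) ∧ ¬ M a b = 0} =
      (Fintype.card F - 1) * Fintype.card F ^
        ((B.filter fun p => p.2 = b ∧ p.1 ≠ a).card +
          (B.filter fun p => p.1 = a ∧ p.2 ≠ b).card) *
        mcount F (contractBoard B a b) (r - 1) := by
    have step1 : Nat.card {M : Matrix (Fin m) (Fin n) F //
        (M.rank = r ∧ ∀ i j, (i, j) ∉ B → M i j = 0) ∧ ¬ M a b = 0} =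
        Nat.card {M : Matrix (Fin m) (Fin n) F //
          M.rank = r ∧ (∀ i j, (i, j) ∉ B → M i j = 0) ∧ M a b ≠ 0} :=
      Nat.card_congr (Equiv.subtypeEquivRight fun M => by tauto)
    have step2 : Nat.card {M : Matrix (Fin m) (Fin n) F //
        M.rank = r ∧ (∀ i j, (i, j) ∉ B → M i j = 0) ∧ M a b ≠ 0} =
        Nat.card {M : {M : Matrix (Fin m) (Fin n) F //
          (∀ i j, (i, j) ∉ B → M i j = 0) ∧ M a b ≠ 0} // M.1.rank = r} :=
      (card_shuffle _ _).symm
    have step3 : Nat.card {M : {M : Matrix (Fin m) (Fin n) F //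
          (∀ i j, (i, j) ∉ B → M i j = 0) ∧ M a b ≠ 0} // M.1.rank = r} =
        Nat.card {y : {x : F // x ≠ 0} × ({i : Fin m // (i, b) ∈ B ∧ i ≠ a} → F) ×
          ({j : Fin n // (a, j) ∈ B ∧ j ≠ b} → F) ×
          {M' : Matrix (Fin (m - 1)) (Fin (n - 1)) F //
            ∀ s t, (s, t) ∉ contractBoard B a b → M' s t = 0} //
          (y.2.2.2.1).rank = r - 1} := by
      apply Nat.card_congr
      refine Equiv.subtypeEquiv (decompose hB hc) (fun M => ?_)
      have hd := decompose_rank hB hc M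
      constructor
      · intro h
        rw [← h, hd, Nat.add_sub_cancel]
      · intro h
        rw [hd, h]
        exact Nat.sub_add_cancel hr
    have e34 : {y : {x : F // x ≠ 0} × ({i : Fin m // (i, b) ∈ B ∧ i ≠ a} → F) ×
          ({j : Fin n // (a, j) ∈ B ∧ j ≠ b} → F) ×
          {M' : Matrix (Fin (m - 1)) (Fin (n - 1)) F //
            ∀ s t, (s, t) ∉ contractBoard B a b → M' s t = 0} //
          (y.2.2.2.1).rank = r - 1} ≃
        {x : F // x ≠ 0} × ({i : Fin m // (i, b) ∈ B ∧ i ≠ a} → F) ×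
          ({j : Fin n // (a, j) ∈ B ∧ j ≠ b} → F) ×
          {M' : {M' : Matrix (Fin (m - 1)) (Fin (n - 1)) F //
            ∀ s t, (s, t) ∉ contractBoard B a b → M' s t = 0} // M'.1.rank = r - 1} := by
      refine ⟨fun y => (y.1.1, y.1.2.1, y.1.2.2.1, ⟨y.1.2.2.2, y.2⟩),
        fun z => ⟨(z.1, z.2.1, z.2.2.1, z.2.2.2.1), z.2.2.2.2⟩, fun y => rfl, fun z => rfl⟩
    have step4 : Nat.card {y : {x : F // x ≠ 0} × ({i : Fin m // (i, b) ∈ B ∧ i ≠ a} → F) ×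
          ({j : Fin n // (a, j) ∈ B ∧ j ≠ b} → F) ×
          {M' : Matrix (Fin (m - 1)) (Fin (n - 1)) F //
            ∀ s t, (s, t) ∉ contractBoard B a b → M' s t = 0} //
          (y.2.2.2.1).rank = r - 1} =
        Nat.card {x : F // x ≠ 0} * Nat.card ({i : Fin m // (i, b) ∈ B ∧ i ≠ a} → F) *
          Nat.card ({j : Fin n // (a, j) ∈ B ∧ j ≠ b} → F) *
          Nat.card {M' : {M' : Matrix (Fin (m - 1)) (Fin (n - 1)) F //
            ∀ s t, (s, t) ∉ contractBoard B a b → M' s t = 0} // M'.1.rank = r - 1} := by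
      rw [Nat.card_congr e34, Nat.card_prod, Nat.card_prod, Nat.card_prod]
      ring
    have hx : Nat.card {x : F // x ≠ 0} = Fintype.card F - 1 := by
      rw [Nat.card_eq_fintype_card]
      classical
      rw [Fintype.card_subtype_compl, Fintype.card_subtype_eq]
    have hcv : Nat.card ({i : Fin m // (i, b) ∈ B ∧ i ≠ a} → F) =
        Fintype.card F ^ (B.filter fun p => p.2 = b ∧ p.1 ≠ a).card := by
      rw [Nat.card_eq_fintype_card, Fintype.card_fun, card_colC]
    have hrv : Nat.card ({j : Fin n // (a, j) ∈ B ∧ j ≠ b} → F) =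
        Fintype.card F ^ (B.filter fun p => p.1 = a ∧ p.2 ≠ b).card := by
      rw [Nat.card_eq_fintype_card, Fintype.card_fun, card_rowC]
    have hlast : Nat.card {M' : {M' : Matrix (Fin (m - 1)) (Fin (n - 1)) F //
        ∀ s t, (s, t) ∉ contractBoard B a b → M' s t = 0} // M'.1.rank = r - 1} =
        mcount F (contractBoard B a b) (r - 1) := by
      rw [card_shuffle (fun M' : Matrix (Fin (m - 1)) (Fin (n - 1)) F =>
        ∀ s t, (s, t) ∉ contractBoard B a b → M' s t = 0) (fun M' => M'.rank = r - 1)]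
      rfl
    rw [step1, step2, step3, step4, hx, hcv, hrv, hlast, pow_add]
    ring
  rw [mcount, hsplit, hA, hB2]
end MatrixCount

section Comb

variable {m n : ℕ}

lemma mem_placements {B : Finset (Fin m × Fin n)} {r : ℕ} {c : Finset (Fin m × Fin n)} :
    c ∈ placements B r ↔ c ⊆ B ∧ c.card = r ∧
      ∀ p ∈ c, ∀ p' ∈ c, p ≠ p' → p.1 ≠ p'.1 ∧ p.2 ≠ p'.2 := by
  simp [placements, Finset.mem_filter, Finset.mem_powerset, and_assoc]

lemma placements_zero (B : Finset (Fin m × Fin n)) : placements B 0 = {∅} := by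
  ext c
  rw [Finset.mem_singleton, mem_placements]
  constructor
  · rintro ⟨_, hcard, _⟩
    exact Finset.card_eq_zero.mp hcard
  · rintro rfl
    exact ⟨Finset.empty_subset _, Finset.card_empty, fun p hp => absurd hp (Finset.notMem_empty _)⟩

lemma placements_empty {r : ℕ} (hr : 1 ≤ r) :
    placements (∅ : Finset (Fin m × Fin n)) r = ∅ := by
  ext c
  rw [mem_placements]
  simp only [Finset.notMem_empty, iff_false]
  rintro ⟨hsub, hcard, _⟩
  have : c = ∅ := Finset.subset_empty.mp hsub
  rw [this, Finset.card_empty] at hcard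
  omega

lemma invNE_emptyc (B : Finset (Fin m × Fin n)) : invNE B ∅ = B.card := by
  unfold invNE
  rw [Finset.filter_true_of_mem]
  intro p _
  exact ⟨Finset.notMem_empty _, fun p' hp' => absurd hp' (Finset.notMem_empty _),
    fun p' hp' => absurd hp' (Finset.notMem_empty _)⟩

lemma exists_corner {B : Finset (Fin m × Fin n)} (hne : B.Nonempty) :
    ∃ a b, isSWCorner B (a, b) := by
  obtain ⟨p, hp, hpmax⟩ := Finset.exists_max_image B (fun p => p.1) hne
  have hne2 : (B.filter fun p' => p'.1 = p.1).Nonempty := ⟨p, Finset.mem_filter.mpr ⟨hp, rfl⟩⟩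
  obtain ⟨w, hw, hwmin⟩ := Finset.exists_min_image _ (fun p => p.2) hne2
  rw [Finset.mem_filter] at hw
  refine ⟨w.1, w.2, ?_, ?_⟩
  · simpa using hw.1
  · intro p' hp' hne' hcon
    obtain ⟨h1, h2⟩ := hcon
    have hmax' : p'.1 ≤ p.1 := hpmax p' hp'
    have heq1 : p'.1 = w.1 := le_antisymm (by rw [hw.2]; exact hmax') h1
    have hp'f : p' ∈ B.filter fun q => q.1 = p.1 :=
      Finset.mem_filter.mpr ⟨hp', by rw [heq1, hw.2]⟩
    have hmin' : w.2 ≤ p'.2 := hwmin p' hp'f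
    have heq2 : p'.2 = w.2 := le_antisymm h2 hmin'
    exact hne' (Prod.ext_iff.mpr ⟨heq1, heq2⟩)

lemma hasNE_erase {B : Finset (Fin m × Fin n)} {a : Fin m} {b : Fin n}
    (hB : hasNE B) (hc : isSWCorner B (a, b)) : hasNE (B.erase (a, b)) := by
  intro i i' j j' hi hj h1 h2 h3
  have h1' := Finset.mem_of_mem_erase h1
  have h2' := Finset.mem_of_mem_erase h2
  have h3' := Finset.mem_of_mem_erase h3
  have hmem : (i, j') ∈ B := hB i i' j j' hi hj h1' h2' h3'
  apply Finset.mem_erase.mpr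
  refine ⟨?_, hmem⟩
  intro heq
  rw [Prod.mk.injEq] at heq
  apply hc.2 (i', j) h2'
  · intro heq2
    rw [Prod.mk.injEq] at heq2
    rw [heq2.1] at hi
    rw [← heq.1] at hi
    exact absurd rfl (ne_of_gt hi)
  · constructor
    · rw [← heq.1]; exact le_of_lt hi
    · rw [← heq.2]; exact le_of_lt hj

lemma hasNE_contract {B : Finset (Fin m × Fin n)} {a : Fin m} {b : Fin n}
    (hB : hasNE B) : hasNE (contractBoard B a b) := by
  intro x x' y y' hx hy h1 h2 h3
  rw [mem_contractBoard] at h1 h2 h3 ⊢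
  exact hB _ _ _ _ ((unContract_lt_iff a x x').mpr hx) ((unContract_lt_iff b y y').mpr hy)
    h1 h2 h3

end Comb

section Comb2

variable {m n : ℕ} {B : Finset (Fin m × Fin n)} {a : Fin m} {b : Fin n}

/-- The total expansion map on cells. -/
def expand (a : Fin m) (b : Fin n) (y : Fin (m - 1) × Fin (n - 1)) : Fin m × Fin n :=
  (unContract a y.1, unContract b y.2)

lemma expand_inj : Function.Injective (expand a b) := by
  intro y z h
  rw [expand, expand, Prod.mk.injEq] at h
  exact Prod.ext_iff.mpr ⟨unContract_inj a h.1, unContract_inj b h.2⟩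

lemma expand_fst (y : Fin (m - 1) × Fin (n - 1)) : (expand a b y).1 = unContract a y.1 := rfl
lemma expand_snd (y : Fin (m - 1) × Fin (n - 1)) : (expand a b y).2 = unContract b y.2 := rfl

lemma expand_ne_corner (y : Fin (m - 1) × Fin (n - 1)) : expand a b y ≠ (a, b) := by
  intro h
  exact unContract_ne a y.1 (congrArg Prod.fst h)

lemma expand_mem (y : Fin (m - 1) × Fin (n - 1)) :
    y ∈ contractBoard B a b ↔ expand a b y ∈ B := mem_contractBoard

lemma card_contract (hab : (a, b) ∈ B) :
    (B.filter fun p => p.1 ≠ a ∧ p.2 ≠ b).card = (contractBoard B a b).card := by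
  classical
  apply Finset.card_bij (fun p hp =>
    ((con a p.1 (Finset.mem_filter.mp hp).2.1), (con b p.2 (Finset.mem_filter.mp hp).2.2)))
  · intro p hp
    rw [mem_contractBoard]
    have h1 := (Finset.mem_filter.mp hp).1
    simp only [unContract_con]
    simpa using h1
  · intro p hp p' hp' h
    rw [Prod.mk.injEq] at h
    have h1 := congrArg (unContract a) h.1
    have h2 := congrArg (unContract b) h.2
    rw [unContract_con, unContract_con] at h1
    rw [unContract_con, unContract_con] at h2
    exact Prod.ext_iff.mpr ⟨h1, h2⟩
  · intro y hy
    rw [mem_contractBoard] at hy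
    refine ⟨(unContract a y.1, unContract b y.2), ?_, ?_⟩
    · exact Finset.mem_filter.mpr ⟨hy, unContract_ne a y.1, unContract_ne b y.2⟩
    · simp only [con_unContract]

lemma card_B_decomp (hab : (a, b) ∈ B) :
    B.card = (contractBoard B a b).card + 1 +
      (B.filter fun p => p.2 = b ∧ p.1 ≠ a).card +
      (B.filter fun p => p.1 = a ∧ p.2 ≠ b).card := by
  classical
  have h1 : (B.filter fun p => p.1 = a).card + (B.filter fun p => ¬ p.1 = a).card = B.card :=
    Finset.card_filter_add_card_filter_not _
  have h2 : B.filter (fun p => p.1 = a) =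
      insert (a, b) (B.filter fun p => p.1 = a ∧ p.2 ≠ b) := by
    ext p
    simp only [Finset.mem_filter, Finset.mem_insert]
    constructor
    · rintro ⟨hpB, hp1⟩
      by_cases hp2 : p.2 = b
      · exact Or.inl (Prod.ext_iff.mpr ⟨hp1, hp2⟩)
      · exact Or.inr ⟨hpB, hp1, hp2⟩
    · rintro (rfl | ⟨hpB, hp1, _⟩)
      · exact ⟨hab, rfl⟩
      · exact ⟨hpB, hp1⟩
  have h2c : (B.filter fun p => p.1 = a).card =
      (B.filter fun p => p.1 = a ∧ p.2 ≠ b).card + 1 := by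
    rw [h2, Finset.card_insert_of_notMem]
    intro hmem
    exact (Finset.mem_filter.mp hmem).2.2 rfl
  have h3 : ((B.filter fun p => ¬ p.1 = a).filter fun p => p.2 = b).card +
      ((B.filter fun p => ¬ p.1 = a).filter fun p => ¬ p.2 = b).card =
      (B.filter fun p => ¬ p.1 = a).card :=
    Finset.card_filter_add_card_filter_not _
  have h4 : (B.filter fun p => ¬ p.1 = a).filter (fun p => p.2 = b) =
      B.filter fun p => p.2 = b ∧ p.1 ≠ a := by
    ext p
    simp only [Finset.mem_filter]
    tauto
  have h5 : (B.filter fun p => ¬ p.1 = a).filter (fun p => ¬ p.2 = b) =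
      B.filter fun p => p.1 ≠ a ∧ p.2 ≠ b := by
    ext p
    simp only [Finset.mem_filter]
    tauto
  have h6 := card_contract hab
  rw [h4, h5, h6] at h3
  omega

lemma placements_erase {r : ℕ} :
    (placements B r).filter (fun c => (a, b) ∉ c) = placements (B.erase (a, b)) r := by
  ext c
  simp only [Finset.mem_filter]
  rw [mem_placements, mem_placements]
  constructor
  · rintro ⟨⟨hsub, hcard, hna⟩, hnc⟩
    refine ⟨fun p hp => Finset.mem_erase.mpr ⟨?_, hsub hp⟩, hcard, hna⟩
    rintro rfl
    exact hnc hp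
  · rintro ⟨hsub, hcard, hna⟩
    have hsub' : c ⊆ B := fun p hp => Finset.mem_of_mem_erase (hsub hp)
    refine ⟨⟨hsub', hcard, hna⟩, fun hcmem => ?_⟩
    exact (Finset.mem_erase.mp (hsub hcmem)).1 rfl

lemma invNE_erase (hc : isSWCorner B (a, b)) {c : Finset (Fin m × Fin n)}
    (hsub : c ⊆ B) (hnc : (a, b) ∉ c) :
    invNE B c = invNE (B.erase (a, b)) c + 1 := by
  classical
  have hpred : (a, b) ∉ c ∧ (∀ p' ∈ c, ¬(p'.2 = (a, b).2 ∧ (a, b).1 < p'.1)) ∧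
      (∀ p' ∈ c, ¬(p'.1 = (a, b).1 ∧ p'.2 < (a, b).2)) := by
    refine ⟨hnc, ?_, ?_⟩
    · rintro p' hp' ⟨h1, h2⟩
      apply hc.2 p' (hsub hp')
      · intro heq
        rw [heq] at h2
        exact absurd rfl (ne_of_gt h2)
      · exact ⟨le_of_lt h2, le_of_eq h1⟩
    · rintro p' hp' ⟨h1, h2⟩
      apply hc.2 p' (hsub hp')
      · intro heq
        rw [heq] at h2
        exact absurd rfl (ne_of_gt h2)
      · exact ⟨le_of_eq h1.symm, le_of_lt h2⟩
  have hnotmem : (a, b) ∉ (B.erase (a, b)).filter fun p => p ∉ c ∧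
      (∀ p' ∈ c, ¬(p'.2 = p.2 ∧ p.1 < p'.1)) ∧ (∀ p' ∈ c, ¬(p'.1 = p.1 ∧ p'.2 < p.2)) := by
    intro hmem
    exact (Finset.mem_erase.mp (Finset.mem_filter.mp hmem).1).1 rfl
  have hins : B = insert (a, b) (B.erase (a, b)) := (Finset.insert_erase hc.1).symm
  unfold invNE
  conv_lhs => rw [hins]
  rw [Finset.filter_insert, if_pos hpred, Finset.card_insert_of_notMem hnotmem]

end Comb2

section Comb3

variable {m n : ℕ} {B : Finset (Fin m × Fin n)} {a : Fin m} {b : Fin n}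

lemma invNE_contract (hc : isSWCorner B (a, b)) (c' : Finset (Fin (m - 1) × Fin (n - 1))) :
    invNE B (insert (a, b) (c'.image (expand a b))) = invNE (contractBoard B a b) c' := by
  classical
  unfold invNE
  symm
  apply Finset.card_bij (fun y _ => expand a b y)
  · -- membership
    intro y hy
    rw [Finset.mem_filter] at hy
    obtain ⟨hyC, hy1, hy2, hy3⟩ := hy
    rw [mem_contractBoard] at hyC
    rw [Finset.mem_filter]
    refine ⟨hyC, ?_, ?_, ?_⟩
    · -- not occupied
      intro hmem
      rcases Finset.mem_insert.mp hmem with h | h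
      · exact expand_ne_corner y h
      · obtain ⟨z, hz, hzy⟩ := Finset.mem_image.mp h
        rw [← expand_inj hzy] at hy1
        exact hy1 hz
    · -- not north of a rook
      rintro p' hp' ⟨h1, h2⟩
      rcases Finset.mem_insert.mp hp' with h | h
      · rw [h] at h1
        exact unContract_ne b y.2 h1.symm
      · obtain ⟨z, hz, rfl⟩ := Finset.mem_image.mp h
        refine hy2 z hz ⟨unContract_inj b h1, ?_⟩
        exact (unContract_lt_iff a y.1 z.1).mp h2
    · -- not east of a rook
      rintro p' hp' ⟨h1, h2⟩
      rcases Finset.mem_insert.mp hp' with h | h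
      · rw [h] at h1
        exact unContract_ne a y.1 h1.symm
      · obtain ⟨z, hz, rfl⟩ := Finset.mem_image.mp h
        refine hy3 z hz ⟨unContract_inj a h1, ?_⟩
        exact (unContract_lt_iff b z.2 y.2).mp h2
  · -- injectivity
    intro y _ z _ h
    exact expand_inj h
  · -- surjectivity
    intro p hp
    rw [Finset.mem_filter] at hp
    obtain ⟨hpB, hp1, hp2, hp3⟩ := hp
    have hpne : p ≠ (a, b) := by
      intro h
      exact hp1 (h ▸ Finset.mem_insert_self _ _)
    have hpa : p.1 ≠ a := by
      intro h
      have hp2b : p.2 ≠ b := by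
        intro h2
        exact hpne (Prod.ext_iff.mpr ⟨h, h2⟩)
      have h3 := hp3 (a, b) (Finset.mem_insert_self _ _)
      have hble : p.2 ≤ b := by
        by_contra hgt
        push_neg at hgt
        exact h3 ⟨h.symm, hgt⟩
      exact hc.2 p hpB hpne ⟨le_of_eq h.symm, hble⟩
    have hpb : p.2 ≠ b := by
      intro h
      have h2 := hp2 (a, b) (Finset.mem_insert_self _ _)
      have hale : a ≤ p.1 := by
        by_contra hgt
        exact h2 ⟨h.symm, lt_of_not_ge hgt⟩
      exact hc.2 p hpB hpne ⟨hale, le_of_eq h⟩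
    refine ⟨(con a p.1 hpa, con b p.2 hpb), ?_, ?_⟩
    · have hexp : expand a b (con a p.1 hpa, con b p.2 hpb) = p := by
        rw [expand]
        simp only [unContract_con]
      rw [Finset.mem_filter, mem_contractBoard]
      refine ⟨?_, ?_, ?_, ?_⟩
      · show (unContract a (con a p.1 hpa), unContract b (con b p.2 hpb)) ∈ B
        rw [unContract_con, unContract_con]
        simpa using hpB
      · intro hmem
        apply hp1
        apply Finset.mem_insert.mpr
        right
        rw [← hexp]
        exact Finset.mem_image_of_mem _ hmem
      · rintro z hz ⟨h1, h2⟩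
        apply hp2 (expand a b z) (Finset.mem_insert.mpr (Or.inr (Finset.mem_image_of_mem _ hz)))
        constructor
        · rw [expand_snd, h1]
          exact unContract_con b p.2 hpb
        · rw [expand_fst]
          have := (unContract_lt_iff a (con a p.1 hpa) z.1).mpr h2
          rw [unContract_con] at this
          exact this
      · rintro z hz ⟨h1, h2⟩
        apply hp3 (expand a b z) (Finset.mem_insert.mpr (Or.inr (Finset.mem_image_of_mem _ hz)))
        constructor
        · rw [expand_fst, h1]
          exact unContract_con a p.1 hpa
        · rw [expand_snd]
          have := (unContract_lt_iff b z.2 (con b p.2 hpb)).mpr h2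
          rw [unContract_con] at this
          exact this
    · rw [expand]
      simp only [unContract_con]

lemma sum_contract (q : ℚ) (hc : isSWCorner B (a, b)) {r : ℕ} (hr : 1 ≤ r) :
    ∑ c ∈ (placements B r).filter (fun c => (a, b) ∈ c),
      q ^ ((B.card : ℤ) - r - invNE B c) =
    ∑ c' ∈ placements (contractBoard B a b) (r - 1),
      q ^ ((B.card : ℤ) - r - invNE (contractBoard B a b) c') := by
  classical
  symm
  apply Finset.sum_bij (fun c' _ => insert (a, b) (c'.image (expand a b)))
  · -- membership
    intro c' hc'
    rw [mem_placements] at hc'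
    obtain ⟨hsub', hcard', hna'⟩ := hc'
    have hnotmem_ab : (a, b) ∉ c'.image (expand a b) := by
      intro h
      obtain ⟨z, _, hz⟩ := Finset.mem_image.mp h
      exact expand_ne_corner z hz
    rw [Finset.mem_filter, mem_placements]
    refine ⟨⟨?_, ?_, ?_⟩, Finset.mem_insert_self _ _⟩
    · intro p hp
      rcases Finset.mem_insert.mp hp with h | h
      · rw [h]; exact hc.1
      · obtain ⟨z, hz, rfl⟩ := Finset.mem_image.mp h
        exact (expand_mem z).mp (hsub' hz)
    · rw [Finset.card_insert_of_notMem hnotmem_ab,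
        Finset.card_image_of_injective _ expand_inj, hcard']
      omega
    · intro p hp p2 hp2 hne
      rcases Finset.mem_insert.mp hp with h | h <;>
        rcases Finset.mem_insert.mp hp2 with h2 | h2
      · exact absurd (h.trans h2.symm) hne
      · obtain ⟨z, _, rfl⟩ := Finset.mem_image.mp h2
        rw [h]
        exact ⟨fun hh => unContract_ne a z.1 hh.symm, fun hh => unContract_ne b z.2 hh.symm⟩
      · obtain ⟨z, _, rfl⟩ := Finset.mem_image.mp h
        rw [h2]
        exact ⟨fun hh => unContract_ne a z.1 hh, fun hh => unContract_ne b z.2 hh⟩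
      · obtain ⟨z, hz, rfl⟩ := Finset.mem_image.mp h
        obtain ⟨w, hw, rfl⟩ := Finset.mem_image.mp h2
        have hzw : z ≠ w := fun hh => hne (congrArg _ hh)
        obtain ⟨hh1, hh2⟩ := hna' z hz w hw hzw
        exact ⟨fun hh => hh1 (unContract_inj a hh), fun hh => hh2 (unContract_inj b hh)⟩
  · -- injectivity
    intro c1 hc1 c2 hc2 h
    have hn1 : (a, b) ∉ c1.image (expand a b) := by
      intro hmem
      obtain ⟨z, _, hz⟩ := Finset.mem_image.mp hmem
      exact expand_ne_corner z hz
    have hn2 : (a, b) ∉ c2.image (expand a b) := by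
      intro hmem
      obtain ⟨z, _, hz⟩ := Finset.mem_image.mp hmem
      exact expand_ne_corner z hz
    have himg : c1.image (expand a b) = c2.image (expand a b) := by
      have e1 := Finset.erase_insert hn1
      have e2 := Finset.erase_insert hn2
      rw [← e1, ← e2, h]
    exact Finset.image_injective expand_inj himg
  · -- surjectivity
    intro c hcmem
    rw [Finset.mem_filter] at hcmem
    obtain ⟨hcp, hab⟩ := hcmem
    rw [mem_placements] at hcp
    obtain ⟨hsub, hcard, hna⟩ := hcp
    have key : ∀ p ∈ c.erase (a, b), p.1 ≠ a ∧ p.2 ≠ b := by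
      intro p hp
      obtain ⟨hpne, hpc⟩ := Finset.mem_erase.mp hp
      exact hna p hpc (a, b) hab hpne
    refine ⟨(c.erase (a, b)).attach.image
      (fun p => (con a p.1.1 (key p.1 p.2).1, con b p.1.2 (key p.1 p.2).2)), ?_, ?_⟩
    · -- membership in placements (contractBoard B a b) (r - 1)
      rw [mem_placements]
      refine ⟨?_, ?_, ?_⟩
      · intro y hy
        obtain ⟨z, _, rfl⟩ := Finset.mem_image.mp hy
        rw [mem_contractBoard]
        simp only [unContract_con]
        have := Finset.mem_of_mem_erase z.2
        simpa using hsub this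
      · rw [Finset.card_image_of_injOn, Finset.card_attach, Finset.card_erase_of_mem hab,
          hcard]
        intro z _ w _ hzw
        rw [Prod.mk.injEq] at hzw
        have e1 := congrArg (unContract a) hzw.1
        have e2 := congrArg (unContract b) hzw.2
        rw [unContract_con, unContract_con] at e1
        rw [unContract_con, unContract_con] at e2
        exact Subtype.ext (Prod.ext_iff.mpr ⟨e1, e2⟩)
      · intro y hy y2 hy2 hne
        obtain ⟨z, _, rfl⟩ := Finset.mem_image.mp hy
        obtain ⟨w, _, rfl⟩ := Finset.mem_image.mp hy2
        have hz' := Finset.mem_of_mem_erase z.2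
        have hw' := Finset.mem_of_mem_erase w.2
        have hzw : z.1 ≠ w.1 := by
          intro hh
          apply hne
          rw [Prod.mk.injEq]
          constructor
          · congr 1 <;> rw [hh]
          · congr 1 <;> rw [hh]
        obtain ⟨hh1, hh2⟩ := hna z.1 hz' w.1 hw' hzw
        constructor
        · intro hh
          apply hh1
          have := congrArg (unContract a) hh
          rw [unContract_con, unContract_con] at this
          exact this
        · intro hh
          apply hh2
          have := congrArg (unContract b) hh
          rw [unContract_con, unContract_con] at this
          exact this
    · -- maps back to c
      have himg : ((c.erase (a, b)).attach.image
          (fun p => (con a p.1.1 (key p.1 p.2).1, con b p.1.2 (key p.1 p.2).2))).image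
            (expand a b) = c.erase (a, b) := by
        ext p
        rw [Finset.mem_image]
        constructor
        · rintro ⟨y, hy, rfl⟩
          obtain ⟨z, _, rfl⟩ := Finset.mem_image.mp hy
          rw [expand]
          simp only [unContract_con]
          exact z.2
        · intro hp
          refine ⟨(con a p.1 (key p hp).1, con b p.2 (key p hp).2), ?_, ?_⟩
          · apply Finset.mem_image.mpr
            exact ⟨⟨p, hp⟩, Finset.mem_attach _ _, rfl⟩
          · rw [expand]
            simp only [unContract_con]
      rw [himg]
      exact Finset.insert_erase hab
  · -- value equality
    intro c' hc'
    rw [invNE_contract hc c']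

end Comb3

section Main

variable (F : Type) [Field F] [Fintype F]

lemma main_base {m n : ℕ} (B : Finset (Fin m × Fin n)) :
    (mcount F B 0 : ℚ) = ((Fintype.card F : ℚ) - 1) ^ 0 *
      ∑ c ∈ placements B 0,
        (Fintype.card F : ℚ) ^ ((B.card : ℤ) - (0 : ℕ) - invNE B c) := by
  rw [mcount_zero, placements_zero, Finset.sum_singleton, invNE_emptyc, pow_zero, one_mul]
  have h : ((B.card : ℤ) - ((0 : ℕ) : ℤ) - ((B.card : ℕ) : ℤ)) = 0 := by push_cast; ring
  rw [h, zpow_zero, Nat.cast_one]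

lemma main_aux : ∀ (N : ℕ) {m n : ℕ} (B : Finset (Fin m × Fin n)), B.card ≤ N → hasNE B →
    ∀ r : ℕ, (mcount F B r : ℚ) =
      ((Fintype.card F : ℚ) - 1) ^ r *
        ∑ c ∈ placements B r, (Fintype.card F : ℚ) ^ ((B.card : ℤ) - r - invNE B c) := by
  intro N
  induction N with
  | zero =>
    intro m n B hcard hB r
    have hBe : B = ∅ := Finset.card_eq_zero.mp (Nat.le_zero.mp hcard)
    subst hBe
    cases r with
    | zero => exact main_base F ∅
    | succ r' =>
      rw [mcount_empty F (by omega), placements_empty (by omega), Finset.sum_empty,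
        mul_zero, Nat.cast_zero]
  | succ N ih =>
    intro m n B hcard hB r
    cases r with
    | zero => exact main_base F B
    | succ r' =>
      rcases Finset.eq_empty_or_nonempty B with rfl | hne
      · rw [mcount_empty F (by omega), placements_empty (by omega), Finset.sum_empty,
          mul_zero, Nat.cast_zero]
      · obtain ⟨a, b, hc⟩ := exists_corner hne
        have hq1 : 1 ≤ Fintype.card F := Fintype.card_pos
        have hq0 : (Fintype.card F : ℚ) ≠ 0 := Nat.cast_ne_zero.mpr (by omega)
        have hBpos : 1 ≤ B.card := Finset.card_pos.mpr ⟨(a, b), hc.1⟩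
        have hdecomp := card_B_decomp hc.1
        have herasecard : (B.erase (a, b)).card + 1 = B.card :=
          Finset.card_erase_add_one hc.1
        have hrec := mcount_rec F hB hc (show 1 ≤ r' + 1 by omega)
        rw [Nat.add_sub_cancel] at hrec
        have hcast : (mcount F B (r' + 1) : ℚ) =
            (mcount F (B.erase (a, b)) (r' + 1) : ℚ) +
              ((Fintype.card F : ℚ) - 1) * (Fintype.card F : ℚ) ^
                ((B.filter fun p => p.2 = b ∧ p.1 ≠ a).card +
                  (B.filter fun p => p.1 = a ∧ p.2 ≠ b).card) *
                (mcount F (contractBoard B a b) r' : ℚ) := by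
          rw [hrec]
          push_cast [Nat.cast_sub hq1]
          ring
        have hle1 : (B.erase (a, b)).card ≤ N := by omega
        have hle2 : (contractBoard B a b).card ≤ N := by omega
        have hSerase : ∑ c ∈ (placements B (r' + 1)).filter (fun c => (a, b) ∉ c),
            (Fintype.card F : ℚ) ^ ((B.card : ℤ) - (r' + 1 : ℕ) - invNE B c) =
            ∑ c ∈ placements (B.erase (a, b)) (r' + 1),
              (Fintype.card F : ℚ) ^
                (((B.erase (a, b)).card : ℤ) - (r' + 1 : ℕ) - invNE (B.erase (a, b)) c) := by
          rw [placements_erase]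
          apply Finset.sum_congr rfl
          intro c hcmem
          rw [mem_placements] at hcmem
          have hsub : c ⊆ B := fun p hp => Finset.mem_of_mem_erase (hcmem.1 hp)
          have hnc : (a, b) ∉ c := fun hmem => (Finset.mem_erase.mp (hcmem.1 hmem)).1 rfl
          have hinv := invNE_erase hc hsub hnc
          congr 1
          omega
        have hScontract : ∑ c ∈ (placements B (r' + 1)).filter (fun c => (a, b) ∈ c),
            (Fintype.card F : ℚ) ^ ((B.card : ℤ) - (r' + 1 : ℕ) - invNE B c) =
            (Fintype.card F : ℚ) ^
                ((B.filter fun p => p.2 = b ∧ p.1 ≠ a).card +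
                  (B.filter fun p => p.1 = a ∧ p.2 ≠ b).card) *
              ∑ c' ∈ placements (contractBoard B a b) r',
                (Fintype.card F : ℚ) ^
                  (((contractBoard B a b).card : ℤ) - (r' : ℕ) - invNE (contractBoard B a b) c') := by
          rw [sum_contract (Fintype.card F : ℚ) hc (show 1 ≤ r' + 1 by omega),
            Nat.add_sub_cancel, Finset.mul_sum]
          apply Finset.sum_congr rfl
          intro c' _
          rw [← zpow_natCast (Fintype.card F : ℚ)
            ((B.filter fun p => p.2 = b ∧ p.1 ≠ a).card +
              (B.filter fun p => p.1 = a ∧ p.2 ≠ b).card), ← zpow_add₀ hq0]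
          congr 1
          omega
        rw [hcast, ih (B.erase (a, b)) hle1 (hasNE_erase hB hc) (r' + 1),
          ih (contractBoard B a b) hle2 (hasNE_contract hB) r',
          ← Finset.sum_filter_add_sum_filter_not (placements B (r' + 1))
            (fun c => (a, b) ∈ c), hScontract, hSerase]
        ring

end Main


end Stmt10Aux

/-- For every board `B ⊆ [m]×[n]` with the NE property, every prime power `q`, and
every `0 ≤ r ≤ m`:
`𝔪_r(B,q) = (q-1)^r ∑_c q^{|B| - r - inv^NE_B(c)}` (sum over placements `c` of `r`
non-attacking rooks on `B`); equivalently `𝔪_r(B,q) = (q-1)^r q^{|B|-r} R^NE_r(B, q^{-1})`. -/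
theorem stmt10 (m n : ℕ) (hm : 1 ≤ m) (hmn : m ≤ n)
    (q : ℕ) (F : Type) [Field F] [Fintype F] (hF : Fintype.card F = q)
    (B : Finset (Fin m × Fin n)) (hB : hasNE B) (r : ℕ) (hr : r ≤ m) :
    (mcount F B r : ℚ) =
      ((q : ℚ) - 1) ^ r *
        ∑ c ∈ placements B r, (q : ℚ) ^ ((B.card : ℤ) - r - invNE B c)
    ∧ (mcount F B r : ℚ) =
        ((q : ℚ) - 1) ^ r * (q : ℚ) ^ ((B.card : ℤ) - r) * RNE B r ((q : ℚ)⁻¹) := by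
  subst hF
  have hq1 : 1 ≤ Fintype.card F := Fintype.card_pos
  have hq0 : (Fintype.card F : ℚ) ≠ 0 := Nat.cast_ne_zero.mpr (by omega)
  have h1 := Stmt10Aux.main_aux F B.card B le_rfl hB r
  refine ⟨h1, ?_⟩
  rw [h1, RNE, mul_assoc]
  congr 1
  rw [Finset.mul_sum]
  apply Finset.sum_congr rfl
  intro c _
  rw [inv_pow, ← zpow_natCast (Fintype.card F : ℚ) (invNE B c), ← zpow_neg,
    ← zpow_add₀ hq0]
  congr 1
end

section
/- Rank counts for the bidiagonal board: Let n ≥ 1 and let B = {(1,1),…,(n,n)} ∪ {(1,2),(2,3),…,(n−1,n)} ⊆ [n]×[n]. Then for every prime power q and every 0 ≤ i ≤ n, the number of n×n matrices over F_q of rank i with support in B is 𝔪_i(B,q) = (q−1)^i · ( C(2n−1−i, i−1) · q^{i−1} + C(2n−1−i, i) · q^{i} ), where C(a,b) denotes the ordinary binomial coefficient (with C(a,−1) = 0). -/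
open Finset

open Matrix Submodule Module
set_option linter.unusedSectionVars false
section Aux
variable {F : Type} [Field F] [Fintype F]

def Bmx {m : ℕ} (d u : Fin m → F) : Matrix (Fin m) (Fin (m+1)) F :=
  fun i j => if (j:ℕ) = (i:ℕ) then d i else if (j:ℕ) = (i:ℕ)+1 then u i else 0

def Amx {m : ℕ} (d : Fin (m+1) → F) (u : Fin m → F) : Matrix (Fin (m+1)) (Fin (m+1)) F :=
  fun i j => if (j:ℕ) = (i:ℕ) then d i
    else if h : (j:ℕ) = (i:ℕ)+1 then u ⟨i, by have := j.isLt; omega⟩ else 0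

def padE (F : Type) [Field F] (k : ℕ) : (Fin k → F) →ₗ[F] (Fin (k+1) → F) where
  toFun v := fun j => if h : (j:ℕ) < k then v ⟨j, h⟩ else 0
  map_add' x y := by funext j; dsimp; split <;> simp
  map_smul' c x := by funext j; dsimp; split <;> simp

-- row identities
lemma Amx_row_castSucc {m : ℕ} (d : Fin (m+2) → F) (u : Fin (m+1) → F) (i : Fin (m+1)) :
    Amx d u i.castSucc = Bmx (Fin.init d) u i := by
  funext j
  simp only [Amx, Bmx, Fin.coe_castSucc, Fin.init]
  split_ifs with h1 h2 <;> rfl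

lemma Amx_row_last {m : ℕ} (d : Fin (m+2) → F) (u : Fin (m+1) → F)
    (hd : d (Fin.last (m+1)) = 0) : Amx d u (Fin.last (m+1)) = 0 := by
  funext j
  simp only [Amx, Fin.val_last]
  split_ifs with h1 h2
  · exact hd
  · exact absurd h2 (by have := j.isLt; omega)
  · rfl

lemma Bmx_row_eq_padE {m : ℕ} (d u : Fin (m+1) → F) (hu : u (Fin.last m) = 0)
    (i : Fin (m+1)) : Bmx d u i = padE F (m+1) (Amx d (Fin.init u) i) := by
  funext j
  simp only [Bmx, padE, LinearMap.coe_mk, AddHom.coe_mk]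
  by_cases hj : (j:ℕ) < m+1
  · rw [dif_pos hj]
    simp only [Amx]
    split_ifs with h1 h2 <;> rfl
  · rw [dif_neg hj]
    have hjval : (j:ℕ) = m+1 := by have := j.isLt; omega
    split_ifs with h1 h2
    · exact absurd h1 (by have := i.isLt; omega)
    · have : i = Fin.last m := Fin.ext (by rw [Fin.val_last]; omega)
      rw [this]; exact hu
    · rfl

lemma Bmx_row_castSucc {m : ℕ} (d u : Fin (m+1) → F) (i : Fin m) :
    Bmx d u i.castSucc = padE F (m+1) (Bmx (Fin.init d) (Fin.init u) i) := by
  funext j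
  simp only [Bmx, padE, LinearMap.coe_mk, AddHom.coe_mk, Fin.coe_castSucc]
  by_cases hj : (j:ℕ) < m+1
  · rw [dif_pos hj]
    split_ifs with h1 h2 <;> simp [Fin.init]
  · rw [dif_neg hj]
    have hjval : (j:ℕ) = m+1 := by have := j.isLt; omega
    split_ifs with h1 h2
    · exact absurd h1 (by have := i.isLt; omega)
    · exact absurd h2 (by have := i.isLt; omega)
    · rfl
end Aux

section RankLemmas
variable {F : Type} [Field F] [Fintype F]

lemma range_fin_succ' {X : Type*} {k : ℕ} (f : Fin (k+1) → X) :
    Set.range f = insert (f (Fin.last k)) (Set.range (fun i : Fin k => f i.castSucc)) := by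
  ext w
  constructor
  · rintro ⟨i, rfl⟩
    induction i using Fin.lastCases with
    | last => exact Set.mem_insert _ _
    | cast i => exact Set.mem_insert_of_mem _ ⟨i, rfl⟩
  · rintro (rfl | ⟨i, rfl⟩) <;> exact ⟨_, rfl⟩

lemma finrank_span_image_eq {k l : ℕ} (f : (Fin k → F) →ₗ[F] (Fin l → F))
    (hf : Function.Injective f) (S : Set (Fin k → F)) :
    finrank F (span F (f '' S)) = finrank F (span F S) := by
  rw [Submodule.span_image]
  exact (LinearEquiv.finrank_eq (Submodule.equivMapOfInjective f hf _)).symm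

lemma padE_injective (k : ℕ) : Function.Injective (padE F k) := by
  intro v w h
  funext i
  have := congrFun h ⟨i, i.isLt.trans (Nat.lt_succ_self k)⟩
  simpa [padE] using this

lemma mem_span_coord_zero {k : ℕ} {S : Set (Fin k → F)} {j : Fin k}
    (hS : ∀ w ∈ S, w j = 0) {x : Fin k → F} (hx : x ∈ span F S) : x j = 0 := by
  induction hx using Submodule.span_induction with
  | mem w hw => exact hS w hw
  | zero => rfl
  | add a b _ _ ha hb => simp [ha, hb]
  | smul c a _ ha => simp [ha]

lemma finrank_span_insert {k : ℕ} (S : Set (Fin k → F)) (v : Fin k → F) (j : Fin k)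
    (hS : ∀ w ∈ S, w j = 0) (hv : v j ≠ 0) :
    finrank F (span F (insert v S)) = finrank F (span F S) + 1 := by
  have hvne : v ≠ 0 := fun h => hv (by simp [h])
  have hdis : span F S ⊓ span F {v} = ⊥ := by
    rw [eq_bot_iff]
    rintro x hx
    obtain ⟨h1, h2⟩ := Submodule.mem_inf.mp hx
    obtain ⟨c, rfl⟩ := Submodule.mem_span_singleton.mp h2
    have := mem_span_coord_zero hS h1
    have hc : c = 0 := by
      by_contra hc
      exact hv (by simpa [hc] using this)
    simp [hc]
  have key := Submodule.finrank_sup_add_finrank_inf_eq (span F S) (span F {v})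
  rw [hdis, finrank_bot, Nat.add_zero, finrank_span_singleton hvne] at key
  rw [Submodule.span_insert, sup_comm, key]

lemma padE_apply_last {m : ℕ} (x : Fin (m+1) → F) :
    padE F (m+1) x (Fin.last (m+1)) = 0 := by
  simp [padE]

lemma rank_eq_finrank_span_row' {a b : ℕ} (M : Matrix (Fin a) (Fin b) F) :
    M.rank = finrank F (span F (Set.range M)) := M.rank_eq_finrank_span_row

lemma rankA2 {m : ℕ} (d : Fin (m+2) → F) (u : Fin (m+1) → F)
    (hd : d (Fin.last (m+1)) = 0) :
    (Amx d u).rank = (Bmx (Fin.init d) u).rank := by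
  rw [rank_eq_finrank_span_row', rank_eq_finrank_span_row']
  rw [range_fin_succ' (Amx d u), Amx_row_last d u hd,
    show (fun i : Fin (m+1) => Amx d u i.castSucc) = Bmx (Fin.init d) u from
      funext (Amx_row_castSucc d u), Submodule.span_insert_zero]

lemma rankB2 {m : ℕ} (d u : Fin (m+1) → F) (hu : u (Fin.last m) = 0) :
    (Bmx d u).rank = (Amx d (Fin.init u)).rank := by
  rw [rank_eq_finrank_span_row', rank_eq_finrank_span_row']
  rw [show Bmx d u = (padE F (m+1)) ∘ (fun i => Amx d (Fin.init u) i) from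
      funext (Bmx_row_eq_padE d u hu), Set.range_comp,
    finrank_span_image_eq _ (padE_injective _)]

lemma rankB1 {m : ℕ} (d u : Fin (m+1) → F) (hu : u (Fin.last m) ≠ 0) :
    (Bmx d u).rank = (Bmx (Fin.init d) (Fin.init u)).rank + 1 := by
  rw [rank_eq_finrank_span_row', rank_eq_finrank_span_row']
  rw [range_fin_succ' (Bmx d u),
    show (fun i : Fin m => Bmx d u i.castSucc)
        = (padE F (m+1)) ∘ (fun i => Bmx (Fin.init d) (Fin.init u) i) from
      funext (Bmx_row_castSucc d u), Set.range_comp]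
  rw [finrank_span_insert _ _ (Fin.last (m+1))
    (by rintro w ⟨x, _, rfl⟩; exact padE_apply_last x)
    (by
      show Bmx d u (Fin.last m) (Fin.last (m+1)) ≠ 0
      simpa [Bmx, Fin.val_last] using hu),
    finrank_span_image_eq _ (padE_injective _)]
end RankLemmas

section A1
variable {F : Type} [Field F] [Fintype F]

/-- last standard basis vector -/
def eL (F : Type) [Field F] (m : ℕ) : Fin (m+2) → F := fun j => if (j:ℕ) = m+1 then 1 else 0

lemma Bmx_row_cast_eq_padE {m : ℕ} (d u : Fin (m+1) → F) (i : Fin m) :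
    Bmx d u i.castSucc = padE F (m+1) (Amx d (Fin.init u) i.castSucc) := by
  funext j
  simp only [Bmx, padE, LinearMap.coe_mk, AddHom.coe_mk, Fin.coe_castSucc]
  by_cases hj : (j:ℕ) < m+1
  · rw [dif_pos hj]
    simp only [Amx, Fin.coe_castSucc]
    split_ifs with h1 h2 <;> simp [Fin.init]
  · rw [dif_neg hj]
    have hjval : (j:ℕ) = m+1 := by have := j.isLt; omega
    split_ifs with h1 h2
    · exact absurd h1 (by have := i.isLt; omega)
    · exact absurd h2 (by have := i.isLt; omega)
    · rfl

lemma Bmx_row_last_decomp {m : ℕ} (d u : Fin (m+1) → F) :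
    Bmx d u (Fin.last m)
      = padE F (m+1) (Amx d (Fin.init u) (Fin.last m)) + u (Fin.last m) • eL F m := by
  funext j
  by_cases h1 : (j:ℕ) = m
  · simp [Bmx, padE, eL, Amx, Fin.val_last, h1]
  · by_cases h2 : (j:ℕ) = m+1
    · simp [Bmx, padE, eL, Amx, Fin.val_last, h1, h2]
    · have hj : (j:ℕ) < m+1 := by have := j.isLt; omega
      simp [Bmx, padE, eL, Amx, Fin.val_last, h1, h2, hj]

lemma Amx_row_last_eq {m : ℕ} (d : Fin (m+2) → F) (u : Fin (m+1) → F) :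
    Amx d u (Fin.last (m+1)) = d (Fin.last (m+1)) • eL F m := by
  funext j
  simp only [Amx, eL, Fin.val_last, Pi.smul_apply, smul_eq_mul]
  split_ifs with h1 h2
  · rw [mul_one]
  · exact absurd h2 (by have := j.isLt; omega)
  · rw [mul_zero]

lemma rankA1 {m : ℕ} (d : Fin (m+2) → F) (u : Fin (m+1) → F)
    (hd : d (Fin.last (m+1)) ≠ 0) :
    (Amx d u).rank = (Amx (Fin.init d) (Fin.init u)).rank + 1 := by
  rw [rank_eq_finrank_span_row', rank_eq_finrank_span_row']
  set S : Set (Fin (m+1) → F) := Set.range (Amx (Fin.init d) (Fin.init u)) with hSdef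
  set vL : Fin (m+2) → F := Amx d u (Fin.last (m+1)) with hvLdef
  have heL : eL F m = (d (Fin.last (m+1)))⁻¹ • vL := by
    rw [hvLdef, Amx_row_last_eq, smul_smul, inv_mul_cancel₀ hd, one_smul]
  have hspan : span F (Set.range (Amx d u))
      = span F (insert vL ((padE F (m+1)) '' S)) := by
    rw [range_fin_succ' (Amx d u),
      show (fun i : Fin (m+1) => Amx d u i.castSucc) = Bmx (Fin.init d) u from
        funext (Amx_row_castSucc d u)]
    apply le_antisymm <;> rw [Submodule.span_le]
    · rintro w (rfl | ⟨i, rfl⟩)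
      · exact subset_span (Set.mem_insert _ _)
      · induction i using Fin.lastCases with
        | last =>
          rw [Bmx_row_last_decomp, heL]
          refine add_mem (subset_span (Set.mem_insert_of_mem _ ⟨_, ⟨_, rfl⟩, rfl⟩)) ?_
          rw [smul_smul]
          exact smul_mem _ _ (subset_span (Set.mem_insert _ _))
        | cast i =>
          rw [Bmx_row_cast_eq_padE]
          exact subset_span (Set.mem_insert_of_mem _ ⟨_, ⟨_, rfl⟩, rfl⟩)
    · rintro w (rfl | ⟨x, ⟨k, rfl⟩, rfl⟩)
      · exact subset_span (Set.mem_insert _ _)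
      · induction k using Fin.lastCases with
        | last =>
          have : padE F (m+1) (Amx (Fin.init d) (Fin.init u) (Fin.last m))
              = Bmx (Fin.init d) u (Fin.last m) - u (Fin.last m) • eL F m := by
            rw [Bmx_row_last_decomp]; abel
          rw [this, heL, smul_smul]
          exact sub_mem (subset_span (Set.mem_insert_of_mem _ ⟨_, rfl⟩))
            (smul_mem _ _ (subset_span (Set.mem_insert _ _)))
        | cast i =>
          rw [← Bmx_row_cast_eq_padE]
          exact subset_span (Set.mem_insert_of_mem _ ⟨_, rfl⟩)
  rw [hspan, finrank_span_insert _ _ (Fin.last (m+1))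
    (by rintro w ⟨x, _, rfl⟩; exact padE_apply_last x)
    (by
      show Amx d u (Fin.last (m+1)) (Fin.last (m+1)) ≠ 0
      simpa [Amx, Fin.val_last] using hd),
    finrank_span_image_eq _ (padE_injective _)]
end A1

section Count
variable (F : Type) [Field F] [Fintype F]

noncomputable def aC (m r : ℕ) : ℕ :=
  Nat.card {p : (Fin (m+1) → F) × (Fin m → F) // (Amx p.1 p.2).rank = r}

noncomputable def bC (m r : ℕ) : ℕ :=
  Nat.card {p : (Fin m → F) × (Fin m → F) // (Bmx p.1 p.2).rank = r}

variable {F}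

lemma matrix_rank_eq_zero_iff {a b : ℕ} (M : Matrix (Fin a) (Fin b) F) :
    M.rank = 0 ↔ M = 0 := by
  constructor
  · intro h
    rw [Matrix.rank_eq_finrank_span_row, Submodule.finrank_eq_zero, Matrix.row] at h
    funext i j
    have : M i ∈ span F (Set.range M) := subset_span ⟨i, rfl⟩
    rw [h] at this
    simpa using congrFun this j
  · rintro rfl
    exact Matrix.rank_zero

lemma Amx_diag {m : ℕ} (d : Fin (m+1) → F) (u : Fin m → F) (i : Fin (m+1)) :
    Amx d u i i = d i := by simp [Amx]

lemma Amx_super {m : ℕ} (d : Fin (m+1) → F) (u : Fin m → F) (k : Fin m) :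
    Amx d u k.castSucc k.succ = u k := by
  simp only [Amx, Fin.val_succ, Fin.coe_castSucc]
  rw [if_neg (by omega)]
  simp

lemma Bmx_diag {m : ℕ} (d u : Fin m → F) (i : Fin m) :
    Bmx d u i i.castSucc = d i := by simp [Bmx]

lemma Bmx_super {m : ℕ} (d u : Fin m → F) (i : Fin m) :
    Bmx d u i i.succ = u i := by
  simp only [Bmx, Fin.val_succ]
  rw [if_neg (by omega)]
  simp

lemma Amx_zero_iff {m : ℕ} (d : Fin (m+1) → F) (u : Fin m → F) :
    Amx d u = 0 ↔ d = 0 ∧ u = 0 := by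
  constructor
  · intro h
    constructor
    · funext i; rw [← Amx_diag d u i, h]; rfl
    · funext k; rw [← Amx_super d u k, h]; rfl
  · rintro ⟨rfl, rfl⟩
    funext i j
    simp only [Amx, Pi.zero_apply]
    split_ifs <;> rfl

lemma Bmx_zero_iff {m : ℕ} (d u : Fin m → F) :
    Bmx d u = 0 ↔ d = 0 ∧ u = 0 := by
  constructor
  · intro h
    constructor
    · funext i; rw [← Bmx_diag d u i, h]; rfl
    · funext k; rw [← Bmx_super d u k, h]; rfl
  · rintro ⟨rfl, rfl⟩
    funext i j
    simp only [Bmx, Pi.zero_apply]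
    split_ifs <;> rfl

lemma aC_zero (m : ℕ) : aC F m 0 = 1 := by
  rw [aC, Nat.card_eq_one_iff_unique]
  constructor
  · constructor
    rintro ⟨p, hp⟩ ⟨p', hp'⟩
    rw [matrix_rank_eq_zero_iff, Amx_zero_iff] at hp hp'
    ext : 2 <;> simp [hp.1, hp.2, hp'.1, hp'.2]
  · exact ⟨⟨(0, 0), by rw [matrix_rank_eq_zero_iff, Amx_zero_iff]; exact ⟨rfl, rfl⟩⟩⟩

lemma bC_zero (m : ℕ) : bC F m 0 = 1 := by
  rw [bC, Nat.card_eq_one_iff_unique]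
  constructor
  · constructor
    rintro ⟨p, hp⟩ ⟨p', hp'⟩
    rw [matrix_rank_eq_zero_iff, Bmx_zero_iff] at hp hp'
    ext : 2 <;> simp [hp.1, hp.2, hp'.1, hp'.2]
  · exact ⟨⟨(0, 0), by rw [matrix_rank_eq_zero_iff, Bmx_zero_iff]; exact ⟨rfl, rfl⟩⟩⟩

lemma bC_base (r : ℕ) : bC F 0 (r+1) = 0 := by
  rw [bC]
  have : IsEmpty {p : (Fin 0 → F) × (Fin 0 → F) // (Bmx p.1 p.2).rank = r+1} := by
    constructor
    rintro ⟨p, hp⟩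
    have := Matrix.rank_le_height (Bmx p.1 p.2)
    omega
  exact Nat.card_of_isEmpty

lemma aC_base2 (r : ℕ) : aC F 0 (r+2) = 0 := by
  rw [aC]
  have : IsEmpty {p : (Fin 1 → F) × (Fin 0 → F) // (Amx p.1 p.2).rank = r+2} := by
    constructor
    rintro ⟨p, hp⟩
    have := Matrix.rank_le_height (Amx p.1 p.2)
    omega
  exact Nat.card_of_isEmpty

lemma cardFne : Nat.card {x : F // x ≠ 0} = Fintype.card F - 1 := by
  classical
  rw [Nat.card_eq_fintype_card, Fintype.card_subtype_compl, Fintype.card_subtype_eq]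

lemma aC_base1 : aC F 0 1 = Fintype.card F - 1 := by
  rw [aC, ← cardFne]
  apply Nat.card_congr
  refine ⟨fun p => ⟨p.1.1 0, ?_⟩, fun x => ⟨(fun _ => x.1, fun i => i.elim0), ?_⟩, ?_, ?_⟩
  · intro h0
    have hz : p.1.1 = 0 := funext fun i => by rw [Fin.eq_zero i]; exact h0
    have : (Amx p.1.1 p.1.2).rank = 0 := by
      rw [matrix_rank_eq_zero_iff, Amx_zero_iff]
      exact ⟨hz, funext fun i => i.elim0⟩
    have h2 := p.2
    rw [h2] at this; omega
  · have hne : Amx (fun _ : Fin 1 => x.1) (fun i : Fin 0 => i.elim0) ≠ 0 := by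
      rw [Ne, Amx_zero_iff]
      rintro ⟨h, -⟩
      exact x.2 (congrFun h 0)
    have h1 := Matrix.rank_le_height (Amx (fun _ : Fin 1 => x.1) (fun i : Fin 0 => i.elim0))
    have h0 : (Amx (fun _ : Fin 1 => x.1) (fun i : Fin 0 => i.elim0)).rank ≠ 0 := by
      rw [Ne, matrix_rank_eq_zero_iff]; exact hne
    exact le_antisymm h1 (Nat.one_le_iff_ne_zero.mpr h0)
  · rintro ⟨⟨d, u⟩, hp⟩
    apply Subtype.ext
    refine Prod.ext (funext fun i => by rw [Fin.eq_zero i]) (funext fun i => i.elim0)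
  · rintro ⟨x, hx⟩; rfl

end Count

section Rec
variable {F : Type} [Field F] [Fintype F]

def splitSub {α : Type*} (P Q : α → Prop) [DecidablePred Q] :
    {x // P x} ≃ {x // P x ∧ Q x} ⊕ {x // P x ∧ ¬Q x} where
  toFun x := if h : Q x.1 then .inl ⟨x.1, x.2, h⟩ else .inr ⟨x.1, x.2, h⟩
  invFun y := y.elim (fun z => ⟨z.1, z.2.1⟩) (fun z => ⟨z.1, z.2.1⟩)
  left_inv x := by by_cases h : Q x.1 <;> simp [h]
  right_inv y := by
    rcases y with z | z
    · simp [z.2.2]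
    · simp [z.2.2]

lemma bC_rec (m r : ℕ) :
    bC F (m+1) (r+1)
      = aC F m (r+1) + Fintype.card F * (Fintype.card F - 1) * bC F m r := by
  classical
  rw [bC, Nat.card_congr (splitSub
    (fun p : (Fin (m+1) → F) × (Fin (m+1) → F) => (Bmx p.1 p.2).rank = r+1)
    (fun p => p.2 (Fin.last m) = 0)), Nat.card_sum]
  congr 1
  · -- u_last = 0 piece ≃ aC m (r+1)
    rw [aC]
    apply Nat.card_congr
    refine ⟨fun p => ⟨(p.1.1, Fin.init p.1.2), ?_⟩,
           fun p => ⟨(p.1.1, Fin.snoc p.1.2 0), ?_, ?_⟩, ?_, ?_⟩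
    · rw [← rankB2 p.1.1 p.1.2 p.2.2]; exact p.2.1
    · rw [rankB2 _ _ (by simp), Fin.init_snoc]; exact p.2
    · simp
    · rintro ⟨⟨d, u⟩, h1, h2⟩
      apply Subtype.ext
      dsimp only
      rw [← h2, Fin.snoc_init_self]
    · rintro ⟨⟨d, u⟩, h⟩
      apply Subtype.ext
      dsimp only
      rw [Fin.init_snoc]
  · -- u_last ≠ 0 piece
    have : Nat.card ({p : (Fin (m+1) → F) × (Fin (m+1) → F) //
        (Bmx p.1 p.2).rank = r+1 ∧ ¬p.2 (Fin.last m) = 0})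
        = Nat.card (F × {x : F // x ≠ 0} ×
            {p : (Fin m → F) × (Fin m → F) // (Bmx p.1 p.2).rank = r}) := by
      apply Nat.card_congr
      refine ⟨fun p => (p.1.1 (Fin.last m), ⟨p.1.2 (Fin.last m), p.2.2⟩,
          ⟨(Fin.init p.1.1, Fin.init p.1.2), ?_⟩),
        fun z => ⟨(Fin.snoc z.2.2.1.1 z.1, Fin.snoc z.2.2.1.2 z.2.1.1), ?_, ?_⟩, ?_, ?_⟩
      · have h := rankB1 p.1.1 p.1.2 p.2.2
        have h2 := p.2.1
        dsimp only
        omega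
      · rw [rankB1 _ _ (by simpa using z.2.1.2), Fin.init_snoc, Fin.init_snoc,
          z.2.2.2]
      · simpa using z.2.1.2
      · rintro ⟨⟨d, u⟩, h1, h2⟩
        apply Subtype.ext
        dsimp only
        rw [Fin.snoc_init_self, Fin.snoc_init_self]
      · rintro ⟨dl, ⟨ul, hul⟩, ⟨⟨d, u⟩, h⟩⟩
        simp only [Fin.snoc_last, Fin.init_snoc]
    rw [this, Nat.card_prod, Nat.card_prod, Nat.card_eq_fintype_card, cardFne, bC]
    ring

lemma aC_rec (m r : ℕ) :
    aC F (m+1) (r+1)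
      = bC F (m+1) (r+1) + Fintype.card F * (Fintype.card F - 1) * aC F m r := by
  classical
  rw [aC, Nat.card_congr (splitSub
    (fun p : (Fin (m+2) → F) × (Fin (m+1) → F) => (Amx p.1 p.2).rank = r+1)
    (fun p => p.1 (Fin.last (m+1)) = 0)), Nat.card_sum]
  congr 1
  · -- d_last = 0 piece ≃ bC (m+1) (r+1)
    rw [bC]
    apply Nat.card_congr
    refine ⟨fun p => ⟨(Fin.init p.1.1, p.1.2), ?_⟩,
           fun p => ⟨(Fin.snoc p.1.1 0, p.1.2), ?_, ?_⟩, ?_, ?_⟩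
    · rw [← rankA2 p.1.1 p.1.2 p.2.2]; exact p.2.1
    · rw [rankA2 _ _ (by simp), Fin.init_snoc]; exact p.2
    · simp
    · rintro ⟨⟨d, u⟩, h1, h2⟩
      apply Subtype.ext
      dsimp only
      rw [← h2, Fin.snoc_init_self]
    · rintro ⟨⟨d, u⟩, h⟩
      apply Subtype.ext
      dsimp only
      rw [Fin.init_snoc]
  · -- d_last ≠ 0 piece
    have : Nat.card ({p : (Fin (m+2) → F) × (Fin (m+1) → F) //
        (Amx p.1 p.2).rank = r+1 ∧ ¬p.1 (Fin.last (m+1)) = 0})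
        = Nat.card (F × {x : F // x ≠ 0} ×
            {p : (Fin (m+1) → F) × (Fin m → F) // (Amx p.1 p.2).rank = r}) := by
      apply Nat.card_congr
      refine ⟨fun p => (p.1.2 (Fin.last m), ⟨p.1.1 (Fin.last (m+1)), p.2.2⟩,
          ⟨(Fin.init p.1.1, Fin.init p.1.2), ?_⟩),
        fun z => ⟨(Fin.snoc z.2.2.1.1 z.2.1.1, Fin.snoc z.2.2.1.2 z.1), ?_, ?_⟩, ?_, ?_⟩
      · have h := rankA1 p.1.1 p.1.2 p.2.2
        have h2 := p.2.1
        dsimp only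
        omega
      · rw [rankA1 _ _ (by simpa using z.2.1.2), Fin.init_snoc, Fin.init_snoc,
          z.2.2.2]
      · simpa using z.2.1.2
      · rintro ⟨⟨d, u⟩, h1, h2⟩
        apply Subtype.ext
        dsimp only
        rw [Fin.snoc_init_self, Fin.snoc_init_self]
      · rintro ⟨ul, ⟨dl, hdl⟩, ⟨⟨d, u⟩, h⟩⟩
        simp only [Fin.snoc_last, Fin.init_snoc]
    rw [this, Nat.card_prod, Nat.card_prod, Nat.card_eq_fintype_card, cardFne, aC]
    ring

end Rec

section Closed

def faF (q m r : ℕ) : ℕ := match r with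
  | 0 => 1
  | r+1 => (q-1)^(r+1) * q^r * ((2*m+1-(r+1)).choose r + (2*m+1-(r+1)).choose (r+1) * q)

def fbF (q m r : ℕ) : ℕ := match r with
  | 0 => 1
  | r+1 => (q-1)^(r+1) * q^r * ((2*m-(r+1)).choose r + (2*m-(r+1)).choose (r+1) * q)

def gbF (q m r : ℕ) : ℕ := match m, r with
  | 0, 0 => 1
  | 0, _+1 => 0
  | m+1, r => fbF q (m+1) r

lemma ID_a (q m r : ℕ) :
    faF q (m+1) (r+1) = fbF q (m+1) (r+1) + q*(q-1)*faF q m r := by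
  cases r with
  | zero =>
    show (q-1)^1 * q^0 * ((2*(m+1)+1-1).choose 0 + (2*(m+1)+1-1).choose 1 * q)
      = (q-1)^1 * q^0 * ((2*(m+1)-1).choose 0 + (2*(m+1)-1).choose 1 * q) + q*(q-1)*1
    rw [show 2*(m+1)+1-1 = 2*m+2 from by omega, show 2*(m+1)-1 = 2*m+1 from by omega,
      Nat.choose_zero_right, Nat.choose_zero_right, Nat.choose_one_right, Nat.choose_one_right]
    generalize q - 1 = Q
    ring
  | succ s =>
    show (q-1)^(s+2) * q^(s+1) * ((2*(m+1)+1-(s+2)).choose (s+1) + (2*(m+1)+1-(s+2)).choose (s+2) * q)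
      = (q-1)^(s+2) * q^(s+1) * ((2*(m+1)-(s+2)).choose (s+1) + (2*(m+1)-(s+2)).choose (s+2) * q)
        + q*(q-1)*((q-1)^(s+1) * q^s * ((2*m+1-(s+1)).choose s + (2*m+1-(s+1)).choose (s+1) * q))
    rcases le_or_gt s (2*m) with hs | hs
    · rw [show 2*(m+1)+1-(s+2) = (2*m-s)+1 from by omega,
        show 2*(m+1)-(s+2) = 2*m-s from by omega,
        show 2*m+1-(s+1) = 2*m-s from by omega,
        Nat.choose_succ_succ ((2*m-s)) (s), Nat.choose_succ_succ ((2*m-s)) (s+1)]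
      generalize q - 1 = Q
      generalize 2*m-s = t at *
      ring
    · obtain ⟨s', rfl⟩ : ∃ s', s = s'+1 := ⟨s-1, by omega⟩
      rw [show 2*(m+1)+1-(s'+1+2) = 0 from by omega,
        show 2*(m+1)-(s'+1+2) = 0 from by omega,
        show 2*m+1-(s'+1+1) = 0 from by omega]
      simp [Nat.choose_zero_succ]

lemma ID_b (q m r : ℕ) :
    fbF q (m+1) (r+1) = faF q m (r+1) + q*(q-1)*gbF q m r := by
  cases m with
  | zero =>
    cases r with
    | zero =>
      show (q-1)^1 * q^0 * ((2*1-1).choose 0 + (2*1-1).choose 1 * q)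
        = (q-1)^1 * q^0 * ((2*0+1-1).choose 0 + (2*0+1-1).choose 1 * q) + q*(q-1)*1
      norm_num
      generalize q - 1 = Q
      ring
    | succ s =>
      show (q-1)^(s+2) * q^(s+1) * ((2*1-(s+2)).choose (s+1) + (2*1-(s+2)).choose (s+2) * q)
        = (q-1)^(s+2) * q^(s+1) * ((2*0+1-(s+2)).choose (s+1) + (2*0+1-(s+2)).choose (s+2) * q)
          + q*(q-1)*0
      rw [show 2*1-(s+2) = 0 from by omega, show 2*0+1-(s+2) = 0 from by omega]
      simp [Nat.choose_zero_succ]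
  | succ M =>
    cases r with
    | zero =>
      show (q-1)^1 * q^0 * ((2*(M+2)-1).choose 0 + (2*(M+2)-1).choose 1 * q)
        = (q-1)^1 * q^0 * ((2*(M+1)+1-1).choose 0 + (2*(M+1)+1-1).choose 1 * q) + q*(q-1)*1
      rw [show 2*(M+2)-1 = 2*M+3 from by omega, show 2*(M+1)+1-1 = 2*M+2 from by omega,
        Nat.choose_zero_right, Nat.choose_zero_right, Nat.choose_one_right, Nat.choose_one_right]
      generalize q - 1 = Q
      ring
    | succ s =>
      show (q-1)^(s+2) * q^(s+1) * ((2*(M+2)-(s+2)).choose (s+1) + (2*(M+2)-(s+2)).choose (s+2) * q)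
        = (q-1)^(s+2) * q^(s+1) * ((2*(M+1)+1-(s+2)).choose (s+1) + (2*(M+1)+1-(s+2)).choose (s+2) * q)
          + q*(q-1)*((q-1)^(s+1) * q^s * ((2*(M+1)-(s+1)).choose s + (2*(M+1)-(s+1)).choose (s+1) * q))
      rcases le_or_gt s (2*M+1) with hs | hs
      · rw [show 2*(M+2)-(s+2) = (2*M+1-s)+1 from by omega,
          show 2*(M+1)+1-(s+2) = 2*M+1-s from by omega,
          show 2*(M+1)-(s+1) = 2*M+1-s from by omega,
          Nat.choose_succ_succ (2*M+1-s) s, Nat.choose_succ_succ (2*M+1-s) (s+1)]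
        generalize q - 1 = Q
        generalize 2*M+1-s = t at *
        ring
      · obtain ⟨s', rfl⟩ : ∃ s', s = s'+1 := ⟨s-1, by omega⟩
        rw [show 2*(M+2)-(s'+1+2) = 0 from by omega,
          show 2*(M+1)+1-(s'+1+2) = 0 from by omega,
          show 2*(M+1)-(s'+1+1) = 0 from by omega]
        simp [Nat.choose_zero_succ]

end Closed

section Main
variable {F : Type} [Field F] [Fintype F]

lemma closed_forms (m : ℕ) :
    (∀ r, aC F m r = faF (Fintype.card F) m r)
      ∧ (∀ r, bC F m r = gbF (Fintype.card F) m r) := by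
  induction m with
  | zero =>
    constructor
    · intro r
      match r with
      | 0 => rw [aC_zero]; rfl
      | 1 =>
        rw [aC_base1]
        show _ = (Fintype.card F - 1)^1 * (Fintype.card F)^0
          * ((2*0+1-1).choose 0 + (2*0+1-1).choose 1 * Fintype.card F)
        norm_num
      | (r+2) =>
        rw [aC_base2]
        have h0 : 2*0+1-(r+2) = 0 := by omega
        show (0:ℕ) = (Fintype.card F - 1)^(r+2) * (Fintype.card F)^(r+1)
          * ((2*0+1-(r+2)).choose (r+1) + (2*0+1-(r+2)).choose (r+2) * Fintype.card F)
        rw [h0]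
        simp [Nat.choose_zero_succ]
    · intro r
      cases r with
      | zero => rw [bC_zero]; rfl
      | succ r => rw [bC_base]; rfl
  | succ m ih =>
    have hb : ∀ r, bC F (m+1) r = gbF (Fintype.card F) (m+1) r := by
      intro r
      cases r with
      | zero => rw [bC_zero]; rfl
      | succ r =>
        show _ = fbF (Fintype.card F) (m+1) (r+1)
        rw [bC_rec m r, ih.1 (r+1), ih.2 r, ID_b]
    refine ⟨?_, hb⟩
    intro r
    cases r with
    | zero => rw [aC_zero]; rfl
    | succ r =>
      rw [aC_rec m r, hb (r+1), ih.1 r]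
      exact (ID_a (Fintype.card F) m r).symm

lemma Amx_eta {m : ℕ} (M : Matrix (Fin (m+1)) (Fin (m+1)) F)
    (hM : ∀ a b : Fin (m+1), ¬((b:ℕ) = (a:ℕ) ∨ (b:ℕ) = (a:ℕ)+1) → M a b = 0) :
    Amx (fun a => M a a) (fun k => M k.castSucc k.succ) = M := by
  funext a b
  simp only [Amx]
  split_ifs with h1 h2
  · obtain rfl : b = a := Fin.ext h1
    rfl
  · refine congrArg₂ M (Fin.ext ?_) (Fin.ext ?_) <;> simp [h2]
  · exact (hM a b (by tauto)).symm

end Main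


lemma mcount_eq_aC {F : Type} [Field F] [Fintype F] (m : ℕ) (i : ℕ) :
    mcount F
        (Finset.univ.filter fun p : Fin (m+1) × Fin (m+1) =>
          (p.2 : ℕ) = (p.1 : ℕ) ∨ (p.2 : ℕ) = (p.1 : ℕ) + 1) i = aC F m i := by
  classical
  rw [mcount, aC]
  apply Nat.card_congr
  have hmem : ∀ (M : Matrix (Fin (m+1)) (Fin (m+1)) F),
      (∀ a b : Fin (m+1), (a, b) ∉ (Finset.univ.filter fun p : Fin (m+1) × Fin (m+1) =>
          (p.2 : ℕ) = (p.1 : ℕ) ∨ (p.2 : ℕ) = (p.1 : ℕ) + 1) → M a b = 0)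
        ↔ (∀ a b : Fin (m+1), ¬((b:ℕ) = (a:ℕ) ∨ (b:ℕ) = (a:ℕ)+1) → M a b = 0) := by
    intro M
    constructor <;> intro h a b hab <;> apply h a b <;> simpa using hab
  refine ⟨fun M => ⟨(fun a => M.1 a a, fun k => M.1 k.castSucc k.succ), ?_⟩,
    fun p => ⟨Amx p.1.1 p.1.2, p.2, ?_⟩, ?_, ?_⟩
  · rw [Amx_eta M.1 ((hmem M.1).mp M.2.2)]
    exact M.2.1
  · intro a b hab
    have : ¬((b:ℕ) = (a:ℕ) ∨ (b:ℕ) = (a:ℕ)+1) := by simpa using hab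
    push_neg at this
    simp only [Amx]
    rw [if_neg this.1, dif_neg this.2]
  · rintro ⟨M, h1, h2⟩
    apply Subtype.ext
    exact Amx_eta M ((hmem M).mp h2)
  · rintro ⟨⟨d, u⟩, h⟩
    apply Subtype.ext
    refine Prod.ext (funext fun a => ?_) (funext fun k => ?_)
    · exact Amx_diag d u a
    · exact Amx_super d u k

/-- **Rank counts for the bidiagonal board.** For `B` the union of the main diagonal and
the upper diagonal of `[n]×[n]`, every prime power `q`, and every `0 ≤ i ≤ n`:
`𝔪_i(B,q) = (q-1)^i (C(2n-1-i, i-1) q^{i-1} + C(2n-1-i, i) q^i)`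
(with the convention `C(a,-1) = 0`). -/
theorem stmt13 (n : ℕ) (hn : 1 ≤ n)
    (q : ℕ) (F : Type) [Field F] [Fintype F] (hF : Fintype.card F = q) (i : ℕ) (hi : i ≤ n) :
    (mcount F
        (Finset.univ.filter fun p : Fin n × Fin n =>
          (p.2 : ℕ) = (p.1 : ℕ) ∨ (p.2 : ℕ) = (p.1 : ℕ) + 1) i : ℚ) =
      ((q : ℚ) - 1) ^ i *
        ((if i = 0 then 0 else (((2 * n - 1 - i).choose (i - 1) : ℕ) : ℚ)) *
            (q : ℚ) ^ ((i : ℤ) - 1) +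
          (((2 * n - 1 - i).choose i : ℕ) : ℚ) * (q : ℚ) ^ i) := by
  subst hF
  obtain ⟨m, rfl⟩ : ∃ m, n = m + 1 := ⟨n - 1, by omega⟩
  rw [mcount_eq_aC, (closed_forms m).1 i]
  have hq : 1 ≤ Fintype.card F := Fintype.card_pos
  cases i with
  | zero =>
    simp [faF]
  | succ s =>
    show ((((Fintype.card F)-1)^(s+1) * (Fintype.card F)^s *
      ((2*m+1-(s+1)).choose s + (2*m+1-(s+1)).choose (s+1) * Fintype.card F) : ℕ) : ℚ) = _
    rw [if_neg (Nat.succ_ne_zero s),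
      show 2*(m+1)-1-(s+1) = 2*m+1-(s+1) from by omega,
      show (((s+1 : ℕ) : ℤ)) - 1 = ((s : ℕ) : ℤ) from by push_cast; ring,
      zpow_natCast, Nat.succ_sub_one]
    push_cast [Nat.cast_sub hq]
    ring
end

section
/- Deletion–contraction for matrix counts on NE boards: Let B ⊆ [m]×[n] be a board with the NE property (m ≤ n), let □ be a SW corner of B, and let q be a prime power. Then for every 1 ≤ r ≤ m, M_r(B, q) = M_r(B\□, q) + q^{|B|−|B/□|−1} · M_{r−1}(B/□, q), where M_{r−1}(B/□,q) is computed for (m−1)×(n−1) matrices. -/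
open Finset

namespace Stmt16Aux

open Matrix

/-! ### Index juggling -/

lemma unContract_val {m : ℕ} (a : Fin m) (x : Fin (m - 1)) :
    ((unContract a x : Fin m) : ℕ) = if (x : ℕ) < (a : ℕ) then (x : ℕ) else (x : ℕ) + 1 := by
  unfold unContract; split <;> simp_all

lemma unContract_ne {m : ℕ} (a : Fin m) (x : Fin (m - 1)) : unContract a x ≠ a := by
  intro h
  have := unContract_val a x
  rw [h] at this
  split_ifs at this <;> omega

lemma unContract_injective {m : ℕ} (a : Fin m) : Function.Injective (unContract a) := by
  intro x y h
  have hx := unContract_val a x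
  have hy := unContract_val a y
  rw [h, hy] at hx
  apply Fin.ext
  split_ifs at hx <;> omega

def cIdx {m : ℕ} (a i : Fin m) (h : i ≠ a) : Fin (m - 1) :=
  if hlt : (i : ℕ) < (a : ℕ) then ⟨(i : ℕ), by have := a.isLt; omega⟩
  else ⟨(i : ℕ) - 1, by
    have h1 : (i : ℕ) ≠ (a : ℕ) := fun h' => h (Fin.ext h')
    have := i.isLt; omega⟩

lemma cIdx_val {m : ℕ} (a i : Fin m) (h : i ≠ a) :
    ((cIdx a i h : Fin (m - 1)) : ℕ) = if (i : ℕ) < (a : ℕ) then (i : ℕ) else (i : ℕ) - 1 := by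
  unfold cIdx; split <;> simp_all

lemma unContract_cIdx {m : ℕ} (a i : Fin m) (h : i ≠ a) : unContract a (cIdx a i h) = i := by
  have h1 : (i : ℕ) ≠ (a : ℕ) := fun h' => h (Fin.ext h')
  apply Fin.ext
  rw [unContract_val, cIdx_val]
  split_ifs <;> omega

lemma cIdx_unContract {m : ℕ} (a : Fin m) (x : Fin (m - 1)) (h : unContract a x ≠ a) :
    cIdx a (unContract a x) h = x :=
  unContract_injective a (by rw [unContract_cIdx])

/-! ### Rank lemmas -/

variable {F : Type} [Field F] {m n : ℕ}

lemma rank_outer_add (N : Matrix (Fin m) (Fin n) F) (u : Fin m → F) (v : Fin n → F)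
    (a : Fin m) (b : Fin n) (hu : u a ≠ 0) (hv : v b ≠ 0)
    (hrow : ∀ j, N a j = 0) (hcol : ∀ i, N i b = 0) :
    Matrix.rank (Matrix.of fun i j => N i j + u i * v j) = N.rank + 1 := by
  classical
  set M : Matrix (Fin m) (Fin n) F := Matrix.of fun i j => N i j + u i * v j with hMdef
  have hu0 : u ≠ 0 := fun h => hu (by rw [h]; rfl)
  have hcolM : ∀ j, Mᵀ j = Nᵀ j + v j • u := by
    intro j; funext i
    simp only [Matrix.transpose_apply, hMdef, Matrix.of_apply, Pi.add_apply, Pi.smul_apply,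
      smul_eq_mul]
    ring
  have hspan : Submodule.span F (Set.range Mᵀ) =
      Submodule.span F (Set.range Nᵀ) ⊔ Submodule.span F {u} := by
    apply le_antisymm
    · rw [Submodule.span_le]
      rintro _ ⟨j, rfl⟩
      rw [SetLike.mem_coe, hcolM j]
      exact Submodule.add_mem _ (Submodule.mem_sup_left (Submodule.subset_span ⟨j, rfl⟩))
        (Submodule.smul_mem _ _ (Submodule.mem_sup_right (Submodule.mem_span_singleton_self u)))
    · have humem : u ∈ Submodule.span F (Set.range Mᵀ) := by
        have hb : Mᵀ b = v b • u := by
          funext i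
          simp only [Matrix.transpose_apply, hMdef, Matrix.of_apply, Pi.smul_apply, smul_eq_mul,
            hcol i]
          ring
        have : u = (v b)⁻¹ • Mᵀ b := by rw [hb, smul_smul, inv_mul_cancel₀ hv, one_smul]
        rw [this]
        exact Submodule.smul_mem _ _ (Submodule.subset_span ⟨b, rfl⟩)
      apply sup_le
      · rw [Submodule.span_le]
        rintro _ ⟨j, rfl⟩
        have h' : Nᵀ j = Mᵀ j - v j • u := by rw [hcolM j]; abel
        rw [SetLike.mem_coe, h']
        exact Submodule.sub_mem _ (Submodule.subset_span ⟨j, rfl⟩)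
          (Submodule.smul_mem _ _ humem)
      · rwa [Submodule.span_singleton_le_iff_mem]
  have hnotmem : u ∉ Submodule.span F (Set.range Nᵀ) := by
    intro hmem
    have hker : Submodule.span F (Set.range Nᵀ) ≤
        LinearMap.ker (LinearMap.proj a : (Fin m → F) →ₗ[F] F) := by
      rw [Submodule.span_le]
      rintro _ ⟨j, rfl⟩
      simp [LinearMap.mem_ker, hrow j]
    exact hu (hker hmem)
  rw [Matrix.rank_eq_finrank_span_cols, Matrix.rank_eq_finrank_span_cols]
  change Module.finrank F (Submodule.span F (Set.range Mᵀ)) =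
    Module.finrank F (Submodule.span F (Set.range Nᵀ)) + 1
  rw [hspan]
  have hdisj : Submodule.span F (Set.range Nᵀ) ⊓ Submodule.span F {u} = ⊥ :=
    ((Submodule.disjoint_span_singleton' hu0).mpr hnotmem).eq_bot
  have hfr := Submodule.finrank_sup_add_finrank_inf_eq
    (Submodule.span F (Set.range Nᵀ)) (Submodule.span F {u})
  rw [hdisj, finrank_bot F (Fin m → F), finrank_span_singleton hu0] at hfr
  omega

lemma rank_contract (a : Fin m) (b : Fin n) (N : Matrix (Fin m) (Fin n) F)
    (hrow : ∀ j, N a j = 0) (hcol : ∀ i, N i b = 0) :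
    N.rank = (N.submatrix (unContract a) (unContract b)).rank := by
  classical
  set P : Matrix (Fin m) (Fin (m - 1)) F :=
    Matrix.of fun i x => if unContract a x = i then 1 else 0 with hP
  set Q : Matrix (Fin (n - 1)) (Fin n) F :=
    Matrix.of fun y j => if unContract b y = j then 1 else 0 with hQ
  set N' := N.submatrix (unContract a) (unContract b) with hN'
  have hPmul : ∀ (k : ℕ) (A : Matrix (Fin (m - 1)) (Fin k) F) (i : Fin m) (j : Fin k),
      (P * A) i j = if h : i = a then 0 else A (cIdx a i h) j := by
    intro k A i j
    rw [Matrix.mul_apply]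
    split
    · next h =>
      apply Finset.sum_eq_zero
      intro x _
      simp [hP, h, unContract_ne a x]
    · next h =>
      rw [Finset.sum_eq_single (cIdx a i h)]
      · simp [hP, unContract_cIdx a i h]
      · intro x _ hx
        have hne : unContract a x ≠ i := by
          intro e
          exact hx (unContract_injective a (by rw [e, unContract_cIdx]))
        simp [hP, hne]
      · simp
  have hQmul : ∀ (k : ℕ) (A : Matrix (Fin k) (Fin (n - 1)) F) (i : Fin k) (j : Fin n),
      (A * Q) i j = if h : j = b then 0 else A i (cIdx b j h) := by
    intro k A i j
    rw [Matrix.mul_apply]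
    split
    · next h =>
      apply Finset.sum_eq_zero
      intro y _
      simp [hQ, h, unContract_ne b y]
    · next h =>
      rw [Finset.sum_eq_single (cIdx b j h)]
      · simp [hQ, unContract_cIdx b j h]
      · intro y _ hy
        have hne : unContract b y ≠ j := by
          intro e
          exact hy (unContract_injective b (by rw [e, unContract_cIdx]))
        simp [hQ, hne]
      · simp
  have h1 : P * N' * Q = N := by
    ext i j
    rw [hQmul]
    split
    · next h => rw [h, hcol]
    · next h =>
      rw [hPmul]
      split
      · next h2 => rw [h2, hrow]
      · next h2 =>
        rw [hN', Matrix.submatrix_apply, unContract_cIdx, unContract_cIdx]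
  have hPt : ∀ (k : ℕ) (A : Matrix (Fin m) (Fin k) F) (x : Fin (m - 1)) (j : Fin k),
      (Pᵀ * A) x j = A (unContract a x) j := by
    intro k A x j
    rw [Matrix.mul_apply]
    rw [Finset.sum_eq_single (unContract a x)]
    · simp [hP]
    · intro i _ hi
      simp [hP, Matrix.transpose_apply, Ne.symm hi]
    · simp
  have hQt : ∀ (k : ℕ) (A : Matrix (Fin k) (Fin n) F) (i : Fin k) (y : Fin (n - 1)),
      (A * Qᵀ) i y = A i (unContract b y) := by
    intro k A i y
    rw [Matrix.mul_apply]
    rw [Finset.sum_eq_single (unContract b y)]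
    · simp [hQ]
    · intro j _ hj
      simp [hQ, Matrix.transpose_apply, Ne.symm hj]
    · simp
  have h2 : Pᵀ * N * Qᵀ = N' := by
    ext x y
    rw [hQt, hPt, hN', Matrix.submatrix_apply]
  apply le_antisymm
  · conv_lhs => rw [← h1]
    exact le_trans (Matrix.rank_mul_le_left _ _) (Matrix.rank_mul_le_right _ _)
  · conv_lhs => rw [← h2]
    exact le_trans (Matrix.rank_mul_le_left _ _) (Matrix.rank_mul_le_right _ _)

/-! ### Clearing and building matrices -/

def clearMat (M : Matrix (Fin m) (Fin n) F) (a : Fin m) (b : Fin n) :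
    Matrix (Fin m) (Fin n) F :=
  Matrix.of fun i j => M i j - M i b * M a j / M a b

noncomputable def buildMat (a : Fin m) (b : Fin n) (c : F) (f : Fin n → F) (g : Fin m → F)
    (N : Matrix (Fin (m - 1)) (Fin (n - 1)) F) : Matrix (Fin m) (Fin n) F :=
  Matrix.of fun i j =>
    if hi : i = a then (if j = b then c else f j)
    else if hj : j = b then g i
    else N (cIdx a i hi) (cIdx b j hj) + g i * f j / c

lemma clearMat_row (M : Matrix (Fin m) (Fin n) F) (a : Fin m) (b : Fin n)
    (hab : M a b ≠ 0) (j : Fin n) : clearMat M a b a j = 0 := by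
  simp only [clearMat, Matrix.of_apply]
  rw [mul_div_cancel_left₀ _ hab, sub_self]

lemma clearMat_col (M : Matrix (Fin m) (Fin n) F) (a : Fin m) (b : Fin n)
    (hab : M a b ≠ 0) (i : Fin m) : clearMat M a b i b = 0 := by
  simp only [clearMat, Matrix.of_apply]
  rw [mul_div_assoc, div_self hab, mul_one, sub_self]

lemma rank_clear (M : Matrix (Fin m) (Fin n) F) (a : Fin m) (b : Fin n)
    (hab : M a b ≠ 0) : M.rank = (clearMat M a b).rank + 1 := by
  have hM : M = Matrix.of fun i j =>
      clearMat M a b i j + (fun i => M i b) i * ((fun j => M a j / M a b) j) := by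
    ext i j
    simp [clearMat, mul_div_assoc]
  conv_lhs => rw [hM]
  rw [rank_outer_add (clearMat M a b) _ _ a b hab
    (by simp [div_self hab])
    (clearMat_row M a b hab) (clearMat_col M a b hab)]

lemma rank_build (a : Fin m) (b : Fin n) (c : F) (hc : c ≠ 0) (f : Fin n → F) (g : Fin m → F)
    (N : Matrix (Fin (m - 1)) (Fin (n - 1)) F) :
    (buildMat a b c f g N).rank = N.rank + 1 := by
  classical
  set Nt : Matrix (Fin m) (Fin n) F := Matrix.of fun i j =>
    if hi : i = a then 0 else if hj : j = b then 0 else N (cIdx a i hi) (cIdx b j hj) with hNt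
  have hrow : ∀ j, Nt a j = 0 := by intro j; simp [hNt]
  have hcol : ∀ i, Nt i b = 0 := by
    intro i
    by_cases hi : i = a <;> simp [hNt, hi]
  have hM : buildMat a b c f g N = Matrix.of fun i j =>
      Nt i j + (Function.update g a c) i * (Function.update (fun j => f j / c) b 1) j := by
    ext i j
    by_cases hi : i = a
    · subst hi
      by_cases hj : j = b
      · subst hj; simp [buildMat, hNt]
      · simp only [buildMat, hNt, Matrix.of_apply, dif_pos, if_neg hj]
        rw [Function.update_self, Function.update_of_ne hj, zero_add,
          ← mul_div_assoc, mul_div_cancel_left₀ _ hc]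
    · by_cases hj : j = b
      · subst hj
        simp [buildMat, hNt, hi, Function.update_apply]
      · simp only [buildMat, hNt, Matrix.of_apply, dif_neg hi, dif_neg hj]
        rw [Function.update_of_ne hi, Function.update_of_ne hj, mul_div_assoc]
  rw [hM, rank_outer_add Nt _ _ a b (by simpa using hc) (by simp) hrow hcol]
  congr 1
  rw [rank_contract a b Nt hrow hcol]
  congr 1
  ext x y
  simp [hNt, Matrix.submatrix_apply, unContract_ne, cIdx_unContract]

/-! ### Counting -/

lemma card_split {α : Type*} [Finite α] (P Q : α → Prop) :
    Nat.card {x // P x} = Nat.card {x // P x ∧ Q x} + Nat.card {x // P x ∧ ¬ Q x} := by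
  classical
  rw [← Nat.card_sum]
  apply Nat.card_congr
  exact ((Equiv.sumCongr (Equiv.subtypeSubtypeEquivSubtypeInter P Q).symm
    (Equiv.subtypeSubtypeEquivSubtypeInter P (fun x => ¬ Q x)).symm).trans
    (Equiv.sumCompl fun y : {x // P x} => Q y.1)).symm

lemma card_eq (B : Finset (Fin m × Fin n)) (a : Fin m) (b : Fin n)
    (hab : (a, b) ∈ B) :
    B.card = (contractBoard B a b).card
      + ((B.erase (a, b)).filter fun p => p.1 = a).card
      + ((B.erase (a, b)).filter fun p => p.2 = b).card + 1 := by
  classical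
  set E := B.erase (a, b) with hE
  have hC : (contractBoard B a b).card = (B.filter fun p => p.1 ≠ a ∧ p.2 ≠ b).card := by
    apply Finset.card_bij
      (fun (p : Fin (m - 1) × Fin (n - 1)) _ => (unContract a p.1, unContract b p.2))
    · intro p hp
      rw [contractBoard, Finset.mem_filter] at hp
      exact Finset.mem_filter.mpr ⟨hp.2, unContract_ne a p.1, unContract_ne b p.2⟩
    · intro p hp p' hp' hpp
      have h1 := congrArg Prod.fst hpp
      have h2 := congrArg Prod.snd hpp
      exact Prod.ext (unContract_injective a h1) (unContract_injective b h2)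
    · intro p hp
      rw [Finset.mem_filter] at hp
      obtain ⟨hpB, hp1, hp2⟩ := hp
      refine ⟨(cIdx a p.1 hp1, cIdx b p.2 hp2), ?_, ?_⟩
      · rw [contractBoard, Finset.mem_filter]
        refine ⟨Finset.mem_univ _, ?_⟩
        simpa [unContract_cIdx] using hpB
      · simp [unContract_cIdx]
  have hsplit1 : (E.filter fun p => p.1 = a).card + (E.filter fun p => ¬ p.1 = a).card = E.card :=
    Finset.card_filter_add_card_filter_not (fun p : Fin m × Fin n => p.1 = a)
  have hsplit2 : ((E.filter fun p => ¬ p.1 = a).filter fun p => p.2 = b).card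
      + ((E.filter fun p => ¬ p.1 = a).filter fun p => ¬ p.2 = b).card
      = (E.filter fun p => ¬ p.1 = a).card :=
    Finset.card_filter_add_card_filter_not (fun p : Fin m × Fin n => p.2 = b)
  have he1 : (E.filter fun p => ¬ p.1 = a).filter (fun p => p.2 = b)
      = E.filter fun p => p.2 = b := by
    rw [Finset.filter_filter]
    apply Finset.filter_congr
    intro p hp
    rw [hE, Finset.mem_erase] at hp
    have hthis : p.2 = b → ¬ p.1 = a := by
      intro h2 h1
      exact hp.1 (Prod.ext h1 h2)
    constructor
    · exact fun h => h.2
    · exact fun h => ⟨hthis h, h⟩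
  have he2 : (E.filter fun p => ¬ p.1 = a).filter (fun p => ¬ p.2 = b)
      = B.filter fun p => p.1 ≠ a ∧ p.2 ≠ b := by
    rw [Finset.filter_filter]
    ext p
    simp only [Finset.mem_filter, hE, Finset.mem_erase, Ne]
    constructor
    · rintro ⟨⟨hne, hBp⟩, h1, h2⟩
      exact ⟨hBp, h1, h2⟩
    · rintro ⟨hBp, h1, h2⟩
      exact ⟨⟨fun e => h1 (congrArg Prod.fst e), hBp⟩, h1, h2⟩
  have hBE : E.card + 1 = B.card := Finset.card_erase_add_one hab
  rw [he1, he2] at hsplit2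
  rw [hC]
  omega

end Stmt16Aux

namespace Stmt16Aux

open Matrix

lemma key (F : Type) [Field F] [Fintype F] {m n : ℕ} (B : Finset (Fin m × Fin n))
    (hB : hasNE B) (a : Fin m) (b : Fin n) (hsw : isSWCorner B (a, b))
    (r : ℕ) (hr : 1 ≤ r) :
    mcount F B r = mcount F (B.erase (a, b)) r +
      (Fintype.card F - 1) * Fintype.card F ^
          (((B.erase (a, b)).filter fun p => p.1 = a).card +
            ((B.erase (a, b)).filter fun p => p.2 = b).card) *
        mcount F (contractBoard B a b) (r - 1) := by
  classical
  obtain ⟨hab, hswmax⟩ := hsw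
  have hcolB : ∀ i : Fin m, (i, b) ∈ B → i ≠ a → i < a := by
    intro i hi hne
    have h := hswmax (i, b) hi (fun e => hne (congrArg Prod.fst e))
    by_contra hlt
    exact h ⟨le_of_not_gt hlt, le_refl b⟩
  have hrowB : ∀ j : Fin n, (a, j) ∈ B → j ≠ b → b < j := by
    intro j hj hne
    have h := hswmax (a, j) hj (fun e => hne (congrArg Prod.snd e))
    by_contra hlt
    exact h ⟨le_refl a, le_of_not_gt hlt⟩
  have hcross : ∀ (i : Fin m) (j : Fin n), i ≠ a → j ≠ b → (i, b) ∈ B → (a, j) ∈ B →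
      (i, j) ∈ B := fun i j hi hj h1 h2 =>
    hB i a b j (hcolB i h1 hi) (hrowB j h2 hj) h1 hab h2
  have hmemC : ∀ (x : Fin (m - 1)) (y : Fin (n - 1)),
      ((x, y) ∈ contractBoard B a b) ↔ (unContract a x, unContract b y) ∈ B := by
    intro x y; simp [contractBoard]
  rw [mcount, card_split _ (fun M : Matrix (Fin m) (Fin n) F => M a b = 0)]
  congr 1
  · rw [mcount]
    apply Nat.card_congr
    apply Equiv.subtypeEquivRight
    intro M
    constructor
    · rintro ⟨⟨hrk, hsupp⟩, h0⟩
      refine ⟨hrk, fun i j hij => ?_⟩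
      by_cases he : (i, j) = (a, b)
      · have hi : i = a := congrArg Prod.fst he
        have hj : j = b := congrArg Prod.snd he
        rw [hi, hj]; exact h0
      · exact hsupp i j fun hmem => hij (Finset.mem_erase.mpr ⟨he, hmem⟩)
    · rintro ⟨hrk, hsupp⟩
      exact ⟨⟨hrk, fun i j hij => hsupp i j fun hmem => hij (Finset.mem_of_mem_erase hmem)⟩,
        hsupp a b (by simp)⟩
  · rw [mcount]
    have hCrank : ∀ (M : Matrix (Fin m) (Fin n) F), M.rank = r → M a b ≠ 0 →
        ((clearMat M a b).submatrix (unContract a) (unContract b)).rank = r - 1 := by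
      intro M hrk hab0
      rw [← rank_contract a b (clearMat M a b) (clearMat_row M a b hab0)
        (clearMat_col M a b hab0)]
      have h := rank_clear M a b hab0
      omega
    have hCsupp : ∀ (M : Matrix (Fin m) (Fin n) F), (∀ i j, (i, j) ∉ B → M i j = 0) →
        ∀ (x : Fin (m - 1)) (y : Fin (n - 1)), (x, y) ∉ contractBoard B a b →
          (clearMat M a b).submatrix (unContract a) (unContract b) x y = 0 := by
      intro M hsupp x y hxy
      rw [hmemC] at hxy
      rw [Matrix.submatrix_apply]
      have hMij : M (unContract a x) (unContract b y) = 0 := hsupp _ _ hxy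
      have hprod : M (unContract a x) b * M a (unContract b y) = 0 := by
        by_contra hne
        rcases mul_ne_zero_iff.mp hne with ⟨h1, h2⟩
        have h1B : (unContract a x, b) ∈ B := by
          by_contra hc; exact h1 (hsupp _ b hc)
        have h2B : (a, unContract b y) ∈ B := by
          by_contra hc; exact h2 (hsupp a _ hc)
        exact hxy (hcross _ _ (unContract_ne a x) (unContract_ne b y) h1B h2B)
      simp only [clearMat, Matrix.of_apply]
      rw [hMij, hprod, zero_div, sub_zero]
    have hBsupp : ∀ (c : F) (f : Fin n → F) (g : Fin m → F)
        (N : Matrix (Fin (m - 1)) (Fin (n - 1)) F),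
        (∀ j, j ≠ b → (a, j) ∉ B → f j = 0) →
        (∀ i, i ≠ a → (i, b) ∉ B → g i = 0) →
        (∀ (x : Fin (m - 1)) (y : Fin (n - 1)), (x, y) ∉ contractBoard B a b → N x y = 0) →
        ∀ i j, (i, j) ∉ B → buildMat a b c f g N i j = 0 := by
      intro c f g N hf hg hN i j hij
      by_cases hi : i = a
      · subst hi
        have hj : j ≠ b := fun e => hij (by rw [e]; exact hab)
        simp only [buildMat, Matrix.of_apply, dif_pos rfl, if_neg hj]
        exact hf j hj hij
      · by_cases hj : j = b
        · subst hj
          simp only [buildMat, Matrix.of_apply, dif_neg hi, dif_pos rfl]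
          exact hg i hi hij
        · have hN0 : N (cIdx a i hi) (cIdx b j hj) = 0 := by
            apply hN
            rw [hmemC, unContract_cIdx, unContract_cIdx]
            exact hij
          have hprod : g i * f j = 0 := by
            by_cases hgB : (i, b) ∈ B
            · by_cases hfB : (a, j) ∈ B
              · exact absurd (hcross i j hi hj hgB hfB) hij
              · rw [hf j hj hfB, mul_zero]
            · rw [hg i hi hgB, zero_mul]
          simp only [buildMat, Matrix.of_apply, dif_neg hi, dif_neg hj, hN0, hprod, zero_div,
            add_zero, zero_add]
    have e : {M : Matrix (Fin m) (Fin n) F //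
          (M.rank = r ∧ ∀ i j, (i, j) ∉ B → M i j = 0) ∧ ¬ M a b = 0} ≃
        {c : F // c ≠ 0} × ({p : Fin n // (a, p) ∈ B.erase (a, b)} → F) ×
          ({p : Fin m // (p, b) ∈ B.erase (a, b)} → F) ×
          {N : Matrix (Fin (m - 1)) (Fin (n - 1)) F //
            N.rank = r - 1 ∧ ∀ x y, (x, y) ∉ contractBoard B a b → N x y = 0} := by
      refine ⟨fun M => ⟨⟨M.1 a b, M.2.2⟩, fun j => M.1 a j.1, fun i => M.1 i.1 b,
          ⟨(clearMat M.1 a b).submatrix (unContract a) (unContract b),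
            hCrank M.1 M.2.1.1 M.2.2, fun x y h => hCsupp M.1 M.2.1.2 x y h⟩⟩,
        fun t => ⟨buildMat a b t.1.1
          (fun j => if h : (a, j) ∈ B.erase (a, b) then t.2.1 ⟨j, h⟩ else 0)
          (fun i => if h : (i, b) ∈ B.erase (a, b) then t.2.2.1 ⟨i, h⟩ else 0)
          t.2.2.2.1, ⟨?_, ?_⟩, ?_⟩, ?_, ?_⟩
      · -- rank of built matrix
        rw [rank_build a b t.1.1 t.1.2, t.2.2.2.2.1]
        omega
      · -- support of built matrix
        apply hBsupp
        · intro j hjb hjB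
          rw [dif_neg]
          intro hmem
          exact hjB (Finset.mem_of_mem_erase hmem)
        · intro i hia hiB
          rw [dif_neg]
          intro hmem
          exact hiB (Finset.mem_of_mem_erase hmem)
        · exact t.2.2.2.2.2
      · -- nonzero corner of built matrix
        simp only [buildMat, Matrix.of_apply, dif_pos rfl, if_pos rfl]
        exact t.1.2
      · -- left inverse
        rintro ⟨M, ⟨hrk, hsupp⟩, h0⟩
        apply Subtype.ext
        simp only
        ext i j
        have hf' : ∀ j : Fin n, j ≠ b →
            (if h : (a, j) ∈ B.erase (a, b) then M a j else 0) = M a j := by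
          intro j hj
          split
          · rfl
          · next h =>
            rw [hsupp a j]
            intro hmem
            exact h (Finset.mem_erase.mpr ⟨fun e => hj (congrArg Prod.snd e), hmem⟩)
        have hg' : ∀ i : Fin m, i ≠ a →
            (if h : (i, b) ∈ B.erase (a, b) then M i b else 0) = M i b := by
          intro i hi
          split
          · rfl
          · next h =>
            rw [hsupp i b]
            intro hmem
            exact h (Finset.mem_erase.mpr ⟨fun e => hi (congrArg Prod.fst e), hmem⟩)
        by_cases hi : i = a
        · subst hi
          by_cases hj : j = b
          · subst hj
            simp only [buildMat, Matrix.of_apply, dif_pos rfl, if_pos rfl, dite_true, ite_true,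
              eq_self_iff_true]
          · simp only [buildMat, Matrix.of_apply, dif_pos rfl, if_neg hj, dite_true, ite_true]
            exact hf' j hj
        · by_cases hj : j = b
          · subst hj
            simp only [buildMat, Matrix.of_apply, dif_neg hi, dif_pos rfl]
            exact hg' i hi
          · simp only [buildMat, Matrix.of_apply, dif_neg hi, dif_neg hj,
              Matrix.submatrix_apply, unContract_cIdx, hf' j hj, hg' i hi]
            simp only [clearMat, Matrix.of_apply]
            rw [sub_add_cancel]
      · -- right inverse
        rintro ⟨⟨c, hc⟩, f, g, N, hNrk, hNsupp⟩
        refine Prod.ext ?_ (Prod.ext ?_ (Prod.ext ?_ ?_))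
        · apply Subtype.ext
          simp only [buildMat, Matrix.of_apply, dif_pos rfl, if_pos rfl, dite_true, ite_true]
        · funext j
          have hjb : j.1 ≠ b := by
            have hm := j.2
            rw [Finset.mem_erase] at hm
            exact fun e => hm.1 (by rw [e])
          simp only [buildMat, Matrix.of_apply, dif_pos rfl, if_neg hjb, dif_pos j.2,
            Subtype.coe_eta, dite_true, ite_true]
        · funext i
          have hia : i.1 ≠ a := by
            have hm := i.2
            rw [Finset.mem_erase] at hm
            exact fun e => hm.1 (by rw [e])
          simp only [buildMat, Matrix.of_apply, dif_neg hia, dif_pos rfl, dif_pos i.2,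
            Subtype.coe_eta, dite_true, ite_true]
        · apply Subtype.ext
          simp only
          ext x y
          have hia := unContract_ne a x
          have hjb := unContract_ne b y
          simp only [Matrix.submatrix_apply, clearMat, Matrix.of_apply, buildMat,
            dif_neg hia, dif_neg hjb, dif_pos rfl, if_pos rfl, if_neg hjb,
            cIdx_unContract, dite_true, ite_true]
          rw [add_sub_cancel_right]
    rw [Nat.card_congr e, Nat.card_prod, Nat.card_prod, Nat.card_prod]
    have h1 : Nat.card {c : F // c ≠ 0} = Fintype.card F - 1 := by
      rw [Nat.card_eq_fintype_card, Fintype.card_subtype]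
      rw [show (Finset.univ.filter fun c : F => c ≠ 0) = Finset.univ.erase 0 from
        Finset.filter_ne' Finset.univ 0]
      rw [Finset.card_erase_of_mem (Finset.mem_univ _), Finset.card_univ]
    have h2 : Nat.card {p : Fin n // (a, p) ∈ B.erase (a, b)}
        = ((B.erase (a, b)).filter fun p => p.1 = a).card := by
      rw [Nat.card_eq_fintype_card, Fintype.card_subtype]
      apply Finset.card_bij (fun (j : Fin n) _ => (a, j))
      · intro j hj
        rw [Finset.mem_filter] at hj
        exact Finset.mem_filter.mpr ⟨hj.2, rfl⟩
      · intro j _ j' _ hjj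
        exact congrArg Prod.snd hjj
      · intro p hp
        rw [Finset.mem_filter] at hp
        refine ⟨p.2, Finset.mem_filter.mpr ⟨Finset.mem_univ _, ?_⟩, ?_⟩
        · rw [show (a, p.2) = p from Prod.ext hp.2.symm rfl]
          exact hp.1
        · exact Prod.ext hp.2.symm rfl
    have h3 : Nat.card {p : Fin m // (p, b) ∈ B.erase (a, b)}
        = ((B.erase (a, b)).filter fun p => p.2 = b).card := by
      rw [Nat.card_eq_fintype_card, Fintype.card_subtype]
      apply Finset.card_bij (fun (i : Fin m) _ => (i, b))
      · intro i hi
        rw [Finset.mem_filter] at hi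
        exact Finset.mem_filter.mpr ⟨hi.2, rfl⟩
      · intro i _ i' _ hii
        exact congrArg Prod.fst hii
      · intro p hp
        rw [Finset.mem_filter] at hp
        refine ⟨p.1, Finset.mem_filter.mpr ⟨Finset.mem_univ _, ?_⟩, ?_⟩
        · rw [show (p.1, b) = p from Prod.ext rfl hp.2.symm]
          exact hp.1
        · exact Prod.ext rfl hp.2.symm
    rw [h1, Nat.card_fun, Nat.card_fun, Nat.card_eq_fintype_card (α := F), h2, h3, ← mcount,
      pow_add]
    ring

end Stmt16Aux

/-- **Deletion–contraction for matrix counts on NE boards.** For a board `B ⊆ [m]×[n]`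
with the NE property, a SW corner `□ = (a,b)` of `B`, a prime power `q`, and `1 ≤ r ≤ m`:
`M_r(B,q) = M_r(B∖□, q) + q^{|B|-|B/□|-1} M_{r-1}(B/□, q)`. -/
theorem stmt16 (m n : ℕ) (hm : 1 ≤ m) (hmn : m ≤ n)
    (q : ℕ) (F : Type) [Field F] [Fintype F] (hF : Fintype.card F = q)
    (B : Finset (Fin m × Fin n)) (hB : hasNE B)
    (a : Fin m) (b : Fin n) (hsw : isSWCorner B (a, b))
    (r : ℕ) (hr1 : 1 ≤ r) (hr2 : r ≤ m) :
    Mred F q B r =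
      Mred F q (B.erase (a, b)) r +
        (q : ℚ) ^ ((B.card : ℤ) - (contractBoard B a b).card - 1) *
          Mred F q (contractBoard B a b) (r - 1) := by
  classical
  subst hF
  have hq2 : 2 ≤ Fintype.card F := Fintype.one_lt_card
  have hkey := Stmt16Aux.key F B hB a b hsw r hr1
  have hcard := Stmt16Aux.card_eq B a b hsw.1
  set k1 := ((B.erase (a, b)).filter fun p => p.1 = a).card with hk1
  set k2 := ((B.erase (a, b)).filter fun p => p.2 = b).card with hk2
  have hz : ((B.card : ℤ) - (contractBoard B a b).card - 1) = ((k1 + k2 : ℕ) : ℤ) := by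
    push_cast
    omega
  have hQ1 : (Fintype.card F : ℚ) - 1 ≠ 0 := by
    have h2 : (2 : ℚ) ≤ (Fintype.card F : ℚ) := by exact_mod_cast hq2
    intro h
    rw [sub_eq_zero] at h
    rw [h] at h2
    norm_num at h2
  have hQ1' : ((Fintype.card F : ℚ) - 1) ^ (r - 1) ≠ 0 := pow_ne_zero _ hQ1
  simp only [Mred]
  rw [hkey, hz, zpow_natCast]
  push_cast [Nat.cast_sub (show 1 ≤ Fintype.card F by omega)]
  have hpow : ((Fintype.card F : ℚ) - 1) ^ r
      = ((Fintype.card F : ℚ) - 1) * ((Fintype.card F : ℚ) - 1) ^ (r - 1) := by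
    conv_lhs => rw [show r = 1 + (r - 1) by omega]
    rw [pow_add, pow_one]
  rw [add_div]
  congr 1
  rw [hpow]
  field_simp
end

section
/- Deletion for permutation diagrams: Let w ∈ S_n and let i < j with w_i < w_j be such that the cell (i, w_j) is a SW corner of the diagram I_w. Let w' = w·(i j) be the permutation obtained from w by swapping the values in positions i and j (so w'_i = w_j, w'_j = w_i, and w'_k = w_k otherwise). Then I_w \ {(i, w_j)} = I_{w'}. -/
open Finset

/-- **Deletion for permutation diagrams.** Let `w ∈ S_n` and `i < j` with `w_i < w_j`
be such that `(i, w_j)` is a SW corner of the diagram `I_w`. Then deleting the cell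
`(i, w_j)` from `I_w` yields the diagram of `w·(i j)` (swap the values at positions
`i` and `j`). -/
theorem stmt18 (n : ℕ) (w : Equiv.Perm (Fin n)) (i j : Fin n)
    (hij : i < j) (hw : w i < w j) (hsw : isSWCorner (diagram w) (i, w j)) :
    (diagram w).erase (i, w j) = diagram (w * Equiv.swap i j) := by
  have hijne : i ≠ j := ne_of_lt hij
  have hstar : ∀ a b : Fin n, i ≤ a → a < b → w a < w b → w b ≤ w j → a = i ∧ b = j := by
    intro a b ha hab hwab hbj
    by_cases h : (a, w b) = (i, w j)
    · rw [Prod.mk.injEq] at h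
      exact ⟨h.1, w.injective h.2⟩
    · have hmem : (a, w b) ∈ diagram w := by
        simp only [diagram, Finset.mem_filter, Finset.mem_univ, true_and]
        exact ⟨b, hab, hwab, rfl⟩
      exact absurd ⟨ha, hbj⟩ (hsw.2 _ hmem h)
  ext ⟨a, c⟩
  simp only [Finset.mem_erase, diagram, Finset.mem_filter, Finset.mem_univ, true_and]
  simp only [Equiv.Perm.mul_apply, Prod.mk.injEq, ne_eq]
  constructor
  · rintro ⟨hne, b, hab, hwab, rfl⟩
    by_cases hai : a = i
    · subst hai
      have hbj' : b ≠ j := fun h => hne ⟨rfl, by rw [h]⟩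
      have hbi : b ≠ a := ne_of_gt hab
      have hjb : w j < w b := by
        by_contra h
        exact hbj' ((hstar a b le_rfl hab hwab (le_of_not_gt h)).2)
      exact ⟨b, hab, by
        rw [Equiv.swap_apply_left, Equiv.swap_apply_of_ne_of_ne hbi hbj']
        exact ⟨hjb, rfl⟩⟩
    · by_cases haj : a = j
      · subst haj
        have hbj' : b ≠ a := ne_of_gt hab
        have hbi : b ≠ i := ne_of_gt (lt_trans hij hab)
        exact ⟨b, hab, by
          rw [Equiv.swap_apply_right, Equiv.swap_apply_of_ne_of_ne hbi hbj']
          exact ⟨lt_trans hw hwab, rfl⟩⟩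
      · by_cases hbi : b = i
        · subst hbi
          exact ⟨j, lt_trans hab hij, by
            rw [Equiv.swap_apply_right, Equiv.swap_apply_of_ne_of_ne hai haj]
            exact ⟨hwab, rfl⟩⟩
        · by_cases hbj' : b = j
          · subst hbj'
            have hia : a < i := by
              rcases lt_or_ge a i with h | h
              · exact h
              · exact absurd ((hstar a b h hab hwab le_rfl).1) hai
            exact ⟨i, hia, by
              rw [Equiv.swap_apply_left, Equiv.swap_apply_of_ne_of_ne hai haj]
              exact ⟨hwab, rfl⟩⟩
          · exact ⟨b, hab, by
              rw [Equiv.swap_apply_of_ne_of_ne hai haj,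
                Equiv.swap_apply_of_ne_of_ne hbi hbj']
              exact ⟨hwab, rfl⟩⟩
  · rintro ⟨b, hab, hwab, rfl⟩
    by_cases hai : a = i
    · subst hai
      rw [Equiv.swap_apply_left] at hwab
      have hbi : b ≠ a := ne_of_gt hab
      by_cases hbj' : b = j
      · subst hbj'
        rw [Equiv.swap_apply_right] at hwab
        exact absurd hw (not_lt_of_gt hwab)
      · rw [Equiv.swap_apply_of_ne_of_ne hbi hbj'] at hwab ⊢
        exact ⟨fun h => absurd h.2 (ne_of_gt hwab), b, hab, lt_trans hw hwab, rfl⟩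
    · by_cases haj : a = j
      · subst haj
        rw [Equiv.swap_apply_right] at hwab
        have hbj' : b ≠ a := ne_of_gt hab
        have hbi : b ≠ i := ne_of_gt (lt_trans hij hab)
        rw [Equiv.swap_apply_of_ne_of_ne hbi hbj'] at hwab ⊢
        have hjb : w a < w b := by
          by_contra h
          exact hbj' ((hstar i b le_rfl (lt_trans hij hab) hwab (le_of_not_gt h)).2)
        exact ⟨fun h => absurd h.1 hai, b, hab, hjb, rfl⟩
      · rw [Equiv.swap_apply_of_ne_of_ne hai haj] at hwab
        by_cases hbi : b = i
        · subst hbi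
          rw [Equiv.swap_apply_left] at hwab ⊢
          exact ⟨fun h => absurd h.1 hai, j, lt_trans hab hij, hwab, rfl⟩
        · by_cases hbj' : b = j
          · subst hbj'
            rw [Equiv.swap_apply_right] at hwab ⊢
            have hia : a < i := by
              rcases lt_or_ge a i with h | h
              · exact h
              · exact absurd ((hstar a b h hab (lt_trans hwab hw) le_rfl).1) hai
            exact ⟨fun h => absurd h.1 hai, i, hia, hwab, rfl⟩
          · rw [Equiv.swap_apply_of_ne_of_ne hbi hbj'] at hwab ⊢
            exact ⟨fun h => absurd h.1 hai, b, hab, hwab, rfl⟩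
end
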